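/- arXiv:0907.0141 — 5 statements merged into one kernel-verified Lean document; each statement's English description precedes it below -/
import Mathlib

section
/- For every prime p, the set of rational numbers {a/n : n ∈ ℕ, a ∈ ℤ, |a| ≤ n, gcd(a,n) = 1} ∩ ℤ_p is dense in the ring ℤ_p of p-adic integers. -/
/-!
Every `x ∈ ℤ_p` is a limit of natural numbers `m`, and each `m` is in turn the limit, as `K → ∞`,
of the fractions `m / (1 + p^K m)`. For `K ≥ 1` these are reduced (`m` is prime to `1 + p^K m`),
balanced (`m ≤ 1 + p^K m`), and lie in `ℤ_p` because their denominator is prime to `p`.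
-/

open Filter Topology

theorem tendsto_div_one_add_pow_mul {𝕜 : Type*} [NormedField 𝕜] {c : 𝕜} (hc : ‖c‖ < 1)
    (x : 𝕜) : Tendsto (fun K : ℕ => x / (1 + c ^ K * x)) atTop (𝓝 x) := by
  have hden : Tendsto (fun K : ℕ => 1 + c ^ K * x) atTop (𝓝 (1 + 0 * x)) :=
    tendsto_const_nhds.add ((tendsto_pow_atTop_nhds_zero_of_norm_lt_one hc).mul_const x)
  have h := (tendsto_const_nhds (x := x)).div hden (by simp : (1 + 0 * x) ≠ 0)
  rwa [zero_mul, add_zero, div_one] at h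

theorem Nat.coprime_one_add_pow_mul {p K : ℕ} (hK : 0 < K) (m : ℕ) :
    p.Coprime (1 + p ^ K * m) :=
  Nat.Coprime.coprime_dvd_left (dvd_pow_self p hK.ne')
    ((Nat.coprime_add_mul_left_right _ 1 m).mpr (Nat.coprime_one_right _))

namespace PadicInt

variable {p : ℕ} [Fact p.Prime]

theorem exists_coe_eq_intCast_div_natCast (a : ℤ) {n : ℕ} (hn : p.Coprime n) :
    ∃ x : ℤ_[p], (x : ℚ_[p]) = a / n :=
  ⟨⟨a / n, by
    rw [norm_div, Padic.norm_natCast_eq_one_iff.mpr hn, div_one]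
    exact Padic.norm_int_le_one a⟩, rfl⟩

theorem closure_eq_preimage_closure_image_coe (s : Set ℤ_[p]) :
    closure s = (↑) ⁻¹' closure (((↑) : ℤ_[p] → ℚ_[p]) '' s) :=
  isOpenEmbedding_coe.isInducing.closure_eq_preimage_closure_image s

end PadicInt

/-- **Density of height-balanced reduced fractions in `ℤ_p` (Haynes).** For every
prime `p`, the set of points of `ℤ_p` that are of the form `a/n` with `n ∈ ℕ`,
`a ∈ ℤ`, `|a| ≤ n` and `gcd(a,n) = 1` is dense in `ℤ_p`. -/
theorem stmt12 (p : ℕ) [Fact p.Prime] :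
    Dense {x : ℤ_[p] | ∃ (a : ℤ) (n : ℕ), 0 < n ∧ |a| ≤ (n : ℤ) ∧ Int.gcd a n = 1 ∧
      (x : ℚ_[p]) = (a : ℚ_[p]) / (n : ℚ_[p])} := by
  set S := {x : ℤ_[p] | ∃ (a : ℤ) (n : ℕ), 0 < n ∧ |a| ≤ (n : ℤ) ∧ Int.gcd a n = 1 ∧
      (x : ℚ_[p]) = (a : ℚ_[p]) / (n : ℚ_[p])}
  have fraction_mem (m K : ℕ) (hK : 0 < K) :
      (m : ℚ_[p]) / (1 + (p : ℚ_[p]) ^ K * m) ∈ ((↑) : ℤ_[p] → ℚ_[p]) '' S := by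
    obtain ⟨x, hx⟩ := PadicInt.exists_coe_eq_intCast_div_natCast (p := p) m
      (Nat.coprime_one_add_pow_mul hK m)
    have hm_le : m ≤ 1 + p ^ K * m :=
      (Nat.le_mul_of_pos_left m (pow_pos (Fact.out (p := p.Prime)).pos K)).trans (Nat.le_add_left _ _)
    refine ⟨x, ⟨m, 1 + p ^ K * m, by omega, ?_, ?_, hx⟩, by simpa using hx⟩
    · rw [abs_of_nonneg (by positivity)]
      exact_mod_cast hm_le
    · rw [Int.gcd_natCast_natCast]
      exact (Nat.coprime_add_mul_right_right m 1 (p ^ K)).mpr (Nat.coprime_one_right m)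
  have natCast_mem_closure (m : ℕ) : (m : ℤ_[p]) ∈ closure S := by
    rw [PadicInt.closure_eq_preimage_closure_image_coe]
    exact mem_closure_of_tendsto (tendsto_div_one_add_pow_mul Padic.norm_p_lt_one _)
      (eventually_atTop.mpr ⟨1, fraction_mem m⟩)
  exact dense_closure.mp
    (PadicInt.denseRange_natCast.mono (Set.range_subset_iff.mpr natCast_mem_closure))
end

section
/- Let p be a prime and let ψ : ℕ → ℝ be a non-negative function taking values in the set {0} ∪ {p^{−j} : j ≥ 0 an integer} and satisfying ψ(n) < 1/(4n) for all n ∈ ℕ. Then for all m, n ∈ ℕ with p ∤ m and p ∤ n one has λ(A_m(ψ/2) ∩ A_n(ψ/2)) ≤ μ_p(E_m(ψ) ∩ E_n(ψ)) ≤ (3/2)·λ(A_m(2ψ) ∩ A_n(2ψ)). -/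
/-!
Assume `ψ m ≤ ψ n` (the statement is symmetric) and, outside the trivial case `ψ m = 0`, write
`ψ m = p⁻ʲ`, `ψ n = p⁻ᵏ`. All three measures are then governed by the number of reduced
fractions `a/m` close to some reduced fraction `b/n`.

On the circle, `A_m(ψ/2) ∩ A_n(ψ/2)` is covered by the intervals of length `ψ m` around the `a/m`
with `|a/m - b/n| ≤ ψ n`, and `A_m(2ψ) ∩ A_n(2ψ)` contains one interval of length `2ψ m` for each
`a/m` with `|a/m - b/n| ≤ 2ψ n`, pairwise disjoint because `4ψ m < 1/m`. In `ℤ_p` the ball of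
radius `p⁻ʲ` has measure `p⁻ʲ`, and `a/m, b/n` are `p`-adically `p⁻ᵏ`-close iff `pᵏ ∣ an - bm`.
Multiplying numerators by `pᵏ`, resp. by its inverse modulo `m`, carries real closeness
`|an - bm| ≤ mn p⁻ᵏ` to `p`-adic closeness and back; the way back costs a factor `2` in the
distance (`|an - bm| ≤ 2mn`) and a factor `3` in the count (numerators range over `[-m, m]`).
-/

open MeasureTheory Filter

noncomputable section

/-- The set `E_n(ψ) ⊆ ℤ_p`: union over integers `a` with `|a| ≤ n`, `gcd(a,n) = 1`
of the closed balls `{x : |x - a/n|_p ≤ ψ(n)}`. -/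
def padicE (p : ℕ) [Fact p.Prime] (ψ : ℕ → ℝ) (n : ℕ) : Set ℤ_[p] :=
  {x | ∃ a : ℤ, |a| ≤ (n : ℤ) ∧ Int.gcd a n = 1 ∧
    ‖(x : ℚ_[p]) - (a : ℚ_[p]) / (n : ℚ_[p])‖ ≤ ψ n}

/-- The set `A_n(ψ) ⊆ ℝ/ℤ`: union over `1 ≤ a ≤ n`, `gcd(a,n) = 1` of the closed
intervals `[a/n - ψ(n), a/n + ψ(n)]` taken mod 1. -/
def circleA (ψ : ℕ → ℝ) (n : ℕ) : Set UnitAddCircle :=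
  {x | ∃ a : ℕ, 1 ≤ a ∧ a ≤ n ∧ Nat.gcd a n = 1 ∧
    ‖x - (((a : ℝ) / (n : ℝ) : ℝ) : UnitAddCircle)‖ ≤ ψ n}

open scoped Topology ENNReal

section Measure

variable {ι α : Type*} [MeasurableSpace α] {μ : Measure α} {s : Finset ι} {f : ι → Set α}
  {T : Set α} {v : ℝ≥0∞}

lemma measure_le_card_mul_of_subset_biUnion (hT : T ⊆ ⋃ i ∈ s, f i)
    (hf : ∀ i ∈ s, μ (f i) ≤ v) : μ T ≤ s.card * v :=
  calc μ T ≤ ∑ i ∈ s, μ (f i) := (measure_mono hT).trans (measure_biUnion_finset_le s f)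
    _ ≤ ∑ _i ∈ s, v := Finset.sum_le_sum hf
    _ = s.card * v := by rw [Finset.sum_const, nsmul_eq_mul]

lemma card_mul_le_measure_of_pairwiseDisjoint (hd : (s : Set ι).PairwiseDisjoint f)
    (hmeas : ∀ i ∈ s, MeasurableSet (f i)) (hT : ∀ i ∈ s, f i ⊆ T) (hf : ∀ i ∈ s, v ≤ μ (f i)) :
    s.card * v ≤ μ T :=
  calc s.card * v = ∑ _i ∈ s, v := by rw [Finset.sum_const, nsmul_eq_mul]
    _ ≤ ∑ i ∈ s, μ (f i) := Finset.sum_le_sum hf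
    _ = μ (⋃ i ∈ s, f i) := (measure_biUnion_finset hd hmeas).symm
    _ ≤ μ T := measure_mono (Set.iUnion₂_subset hT)

end Measure

lemma Nat.pos_of_not_dvd {p m : ℕ} (h : ¬ p ∣ m) : 0 < m :=
  Nat.pos_of_ne_zero fun h0 => h (h0 ▸ dvd_zero p)

lemma Nat.Prime.isCoprime_natCast_of_not_dvd {p m : ℕ} (hp : p.Prime) (hm : ¬ p ∣ m) :
    IsCoprime (p : ℤ) m :=
  Nat.isCoprime_iff_coprime.2 ((Nat.Prime.coprime_iff_not_dvd hp).2 hm)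

lemma exists_add_mul_mem_Icc {m : ℤ} (hm : 0 < m) (X : ℤ) : ∃ s : ℤ, X + s * m ∈ Set.Icc 1 m :=
  ⟨-((X - 1) / m), by
    have h := Int.emod_add_mul_ediv (X - 1) m
    have h0 := Int.emod_nonneg (X - 1) hm.ne'
    have h1 := Int.emod_lt_of_pos (X - 1) hm
    constructor <;> nlinarith⟩

lemma exists_int_abs_add_le_one {α β : ℝ} (h : |α - β| ≤ 1) :
    ∃ t : ℤ, |α + t| ≤ 1 ∧ |β + t| ≤ 1 := by
  refine ⟨⌈max (-1 - α) (-1 - β)⌉, ?_⟩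
  have hle := Int.le_ceil (max (-1 - α) (-1 - β))
  have hlt := Int.ceil_lt_add_one (max (-1 - α) (-1 - β))
  rw [abs_le] at h ⊢
  rw [abs_le]
  constructor <;> constructor <;> cases max_cases (-1 - α) (-1 - β) <;> linarith

lemma abs_add_mul_le_of_abs_div_add_le_one {X t : ℤ} {d : ℕ} (hd : 0 < d)
    (h : |(X : ℝ) / d + t| ≤ 1) : |X + t * d| ≤ d := by
  have hd' : (0 : ℝ) < d := by exact_mod_cast hd
  rw [div_add' _ _ _ hd'.ne', abs_div, abs_of_pos hd', div_le_one hd'] at h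
  exact_mod_cast (by push_cast; linarith : |((X + t * d : ℤ) : ℝ)| ≤ d)

lemma two_mul_lt_pow_of_inv_pow_lt {p m j : ℕ} (hp : 0 < p) (hm : 0 < m)
    (h : ((p : ℝ) ^ j)⁻¹ < 1 / (4 * m)) : 2 * m < p ^ j := by
  rw [one_div, inv_lt_inv₀ (by positivity) (by positivity)] at h
  exact_mod_cast (by linarith : (2 * m : ℝ) < (p : ℝ) ^ j)

lemma abs_intCast_div_natCast_le_one {a : ℤ} {m : ℕ} (ha : |a| ≤ m) : |(a : ℝ) / m| ≤ 1 := by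
  rw [abs_div, Nat.abs_cast]
  exact div_le_one_of_le₀ (by exact_mod_cast ha) (Nat.cast_nonneg m)

lemma exists_abs_sub_le_and_abs_sub_le {x y r R : ℝ} (hr : 0 ≤ r) (hrR : r ≤ R)
    (h : |x - y| ≤ 2 * R) : ∃ w, |w - x| ≤ r ∧ |w - y| ≤ 2 * R - r := by
  rw [abs_le] at h
  rcases le_total x y with hxy | hyx
  · exact ⟨x + r, by rw [add_sub_cancel_left, abs_of_nonneg hr],
      abs_le.mpr ⟨by linarith, by linarith⟩⟩
  · exact ⟨x - r, by rw [sub_sub_cancel_left, abs_neg, abs_of_nonneg hr],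
      abs_le.mpr ⟨by linarith, by linarith⟩⟩

namespace UnitAddCircle

lemma norm_coe_le_abs (x : ℝ) : ‖(x : UnitAddCircle)‖ ≤ |x| := QuotientAddGroup.norm_mk_le_norm

lemma norm_sub_coe_le (x : UnitAddCircle) (w y : ℝ) :
    ‖x - (y : UnitAddCircle)‖ ≤ ‖x - (w : UnitAddCircle)‖ + |w - y| := by
  have : x - (y : UnitAddCircle) = (x - w) + ((w - y : ℝ) : UnitAddCircle) := by
    rw [AddCircle.coe_sub]; abel
  rw [this]
  exact (norm_add_le _ _).trans (add_le_add_right (norm_coe_le_abs _) _)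

lemma coe_add_intCast (x : ℝ) (z : ℤ) : ((x + z : ℝ) : UnitAddCircle) = x := by
  rw [AddCircle.coe_add, add_eq_left, AddCircle.coe_eq_zero_iff]
  exact ⟨z, by simp⟩

lemma inv_natCast_le_norm_intCast_div {q : ℤ} {m : ℕ} (hq : ¬ (m : ℤ) ∣ q) :
    (m : ℝ)⁻¹ ≤ ‖((q / m : ℝ) : UnitAddCircle)‖ := by
  rcases Nat.eq_zero_or_pos m with rfl | hm
  · simp
  have hm' : (0 : ℝ) < m := by exact_mod_cast hm
  have hne : q - m * round ((q : ℝ) / m) ≠ 0 := fun h => hq ⟨_, sub_eq_zero.mp h⟩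
  have h1 : (1 : ℝ) ≤ |((q - m * round ((q : ℝ) / m) : ℤ) : ℝ)| := by
    exact_mod_cast Int.one_le_abs hne
  rw [norm_eq, show (q : ℝ) / m - round ((q : ℝ) / m) =
      ((q - m * round ((q : ℝ) / m) : ℤ) : ℝ) / m by push_cast; field_simp,
    abs_div, abs_of_pos hm']
  exact (inv_eq_one_div (m : ℝ)) ▸ div_le_div_of_nonneg_right h1 hm'.le

end UnitAddCircle

namespace Padic

variable {p : ℕ} [Fact p.Prime]

lemma norm_natCast_eq_one_of_not_dvd {m : ℕ} (hm : ¬ p ∣ m) : ‖(m : ℚ_[p])‖ = 1 :=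
  norm_natCast_eq_one_iff.2 ((Nat.Prime.coprime_iff_not_dvd Fact.out).2 hm)

lemma norm_div_sub_div_le_inv_pow_iff {m n : ℕ} (hm : ¬ p ∣ m) (hn : ¬ p ∣ n) (a b : ℤ)
    (k : ℕ) : ‖(a / m - b / n : ℚ_[p])‖ ≤ ((p : ℝ) ^ k)⁻¹ ↔ (p : ℤ) ^ k ∣ a * n - b * m := by
  have hm0 : (m : ℚ_[p]) ≠ 0 := norm_ne_zero_iff.1 (by simp [norm_natCast_eq_one_of_not_dvd hm])
  have hn0 : (n : ℚ_[p]) ≠ 0 := norm_ne_zero_iff.1 (by simp [norm_natCast_eq_one_of_not_dvd hn])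
  have : (a / m - b / n : ℚ_[p]) = ((a * n - b * m : ℤ) : ℚ_[p]) / (m * n) := by
    push_cast; field_simp
  rw [this, norm_div, norm_mul, norm_natCast_eq_one_of_not_dvd hm,
    norm_natCast_eq_one_of_not_dvd hn, mul_one, div_one, ← zpow_natCast, ← zpow_neg,
    norm_int_le_pow_iff_dvd]

end Padic

namespace PadicInt

variable {p : ℕ} [Fact p.Prime]

instance nhdsNE_zero_neBot : (𝓝[≠] (0 : ℤ_[p])).NeBot := by
  have hlt : ‖(p : ℤ_[p])‖ < 1 := by
    rw [norm_p]; exact inv_lt_one_of_one_lt₀ (by exact_mod_cast (Fact.out : p.Prime).one_lt)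
  have h : Tendsto (fun j : ℕ => (p : ℤ_[p]) ^ j) atTop (𝓝[≠] 0) :=
    tendsto_nhdsWithin_of_tendsto_nhds_of_eventually_within _
      (tendsto_pow_atTop_nhds_zero_of_norm_lt_one hlt)
      (Eventually.of_forall fun j => pow_ne_zero j (by exact_mod_cast (Fact.out : p.Prime).ne_zero))
  exact h.neBot

lemma closedBall_zero_eq_ker_toZModPow (j : ℕ) :
    Metric.closedBall (0 : ℤ_[p]) ((p : ℝ) ^ j)⁻¹ =
      ((toZModPow j : ℤ_[p] →+* ZMod (p ^ j)).toAddMonoidHom.ker : Set ℤ_[p]) := by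
  ext x
  rw [Metric.mem_closedBall, dist_zero_right, ← zpow_natCast, ← zpow_neg,
    norm_le_pow_iff_mem_span_pow, ← ker_toZModPow]
  rfl

/-- The ball of radius `p⁻ʲ` is an additive subgroup of index `pʲ`. -/
lemma measure_closedBall_inv_pow [MeasurableSpace ℤ_[p]] [BorelSpace ℤ_[p]] (μ : Measure ℤ_[p])
    [μ.IsAddHaarMeasure] [IsProbabilityMeasure μ] (z : ℤ_[p]) (j : ℕ) :
    μ (Metric.closedBall z ((p : ℝ) ^ j)⁻¹) = ENNReal.ofReal ((p : ℝ) ^ j)⁻¹ := by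
  have hp : (0 : ℝ) < p := by exact_mod_cast (Fact.out : p.Prime).pos
  set H := (toZModPow j : ℤ_[p] →+* ZMod (p ^ j)).toAddMonoidHom.ker
  have hindex : H.index = p ^ j := by
    rw [AddSubgroup.index_ker, AddMonoidHom.range_eq_top.mpr (ZMod.ringHom_surjective _),
      AddSubgroup.card_top, Nat.card_zmod]
  have : H.FiniteIndex := ⟨by rw [hindex]; exact pow_ne_zero _ (Fact.out : p.Prime).ne_zero⟩
  have hball := closedBall_zero_eq_ker_toZModPow (p := p) j
  have key := H.index_mul_measure (hball ▸ measurableSet_closedBall) μ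
  rw [measure_univ, hindex, ← hball] at key
  rw [Measure.addHaar_closedBall_center, ENNReal.ofReal_inv_of_pos (by positivity),
    ENNReal.ofReal_pow (by positivity), ENNReal.ofReal_natCast]
  refine ENNReal.eq_inv_of_mul_eq_one_left ?_
  rw [mul_comm]; exact_mod_cast key

def ofDiv {m : ℕ} (a : ℤ) (hm : ¬ p ∣ m) : ℤ_[p] :=
  ⟨a / m, by
    rw [norm_div, Padic.norm_natCast_eq_one_of_not_dvd hm, div_one]
    exact Padic.norm_int_le_one a⟩

lemma mem_closedBall_ofDiv {m : ℕ} {a : ℤ} (hm : ¬ p ∣ m) {x : ℤ_[p]} {r : ℝ} :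
    x ∈ Metric.closedBall (ofDiv a hm) r ↔ ‖(x : ℚ_[p]) - a / m‖ ≤ r :=
  Iff.rfl

lemma disjoint_closedBall_ofDiv {m j : ℕ} (hm : ¬ p ∣ m) {A A' : ℤ} (hne : A ≠ A')
    (hlt : |A - A'| < (p : ℤ) ^ j) :
    Disjoint (Metric.closedBall (ofDiv A hm) ((p : ℝ) ^ j)⁻¹)
      (Metric.closedBall (ofDiv A' hm) ((p : ℝ) ^ j)⁻¹) := by
  refine Set.disjoint_left.2 fun x hx hx' => hne (sub_eq_zero.1 ?_)
  have hdist : dist (ofDiv A hm) (ofDiv A' hm) ≤ ((p : ℝ) ^ j)⁻¹ :=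
    (IsUltrametricDist.dist_triangle_max _ x _).trans (max_le (by rwa [dist_comm]) hx')
  have hdvd := (Padic.norm_div_sub_div_le_inv_pow_iff hm hm A A' j).1 hdist
  rw [← sub_mul] at hdvd
  exact Int.eq_zero_of_abs_lt_dvd
    (((Fact.out : p.Prime).isCoprime_natCast_of_not_dvd hm).pow_left.dvd_of_dvd_mul_right hdvd) hlt

end PadicInt

lemma mem_circleA_of_intCast {ψ : ℕ → ℝ} {n : ℕ} (hn : 0 < n) {b : ℤ} (hb : IsCoprime b n)
    {x : UnitAddCircle} (hx : ‖x - ((b / n : ℝ) : UnitAddCircle)‖ ≤ ψ n) : x ∈ circleA ψ n := by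
  obtain ⟨s, h1, h2⟩ := exists_add_mul_mem_Icc (by exact_mod_cast hn : (0 : ℤ) < n) b
  lift b + s * n to ℕ using (by omega) with c hc
  refine ⟨c, by omega, by omega, ?_, ?_⟩
  · rw [← Int.gcd_natCast_natCast, hc, ← Int.isCoprime_iff_gcd_eq_one]
    exact hb.add_mul_right_left s
  · have : (c : ℝ) / n = b / n + s := by
      rw [← Int.cast_natCast, hc]; push_cast; field_simp
    rwa [this, UnitAddCircle.coe_add_intCast]

open scoped Classical in
def closeNumerators (m n : ℕ) (r : ℝ) : Finset ℤ :=
  {a ∈ Finset.Icc 1 (m : ℤ) | IsCoprime a m ∧ ∃ b : ℤ, IsCoprime b n ∧ |(a : ℝ) / m - b / n| ≤ r}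

lemma mem_closeNumerators {m n : ℕ} {r : ℝ} {a : ℤ} :
    a ∈ closeNumerators m n r ↔
      (1 ≤ a ∧ a ≤ m) ∧ IsCoprime a m ∧ ∃ b : ℤ, IsCoprime b n ∧ |(a : ℝ) / m - b / n| ≤ r := by
  simp only [closeNumerators, Finset.mem_filter, Finset.mem_Icc]

lemma volume_circleA_inter_le {ψ : ℕ → ℝ} {m n : ℕ} (hmn : ψ m ≤ ψ n) :
    volume (circleA (fun j => ψ j / 2) m ∩ circleA (fun j => ψ j / 2) n) ≤
      (closeNumerators m n (ψ n)).card * ENNReal.ofReal (ψ m) := by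
  refine measure_le_card_mul_of_subset_biUnion
    (f := fun a : ℤ => Metric.closedBall ((a / m : ℝ) : UnitAddCircle) (ψ m / 2)) ?_ ?_
  · rintro x ⟨⟨a, ha1, ham, hac, hax⟩, ⟨b, hb1, hbn, hbc, hbx⟩⟩
    have hab : ‖((a / m - b / n : ℝ) : UnitAddCircle)‖ ≤ ψ n := by
      rw [AddCircle.coe_sub, ← sub_sub_sub_cancel_left _ _ x]
      linarith [norm_sub_le (x - ((b / n : ℝ) : UnitAddCircle)) (x - ((a / m : ℝ) : UnitAddCircle))]
    rw [UnitAddCircle.norm_eq] at hab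
    have hn : (n : ℝ) ≠ 0 := by norm_cast; omega
    refine Set.mem_biUnion (x := (a : ℤ)) (mem_closeNumerators.2 ⟨⟨by omega, by omega⟩, ?_,
      b + round ((a / m - b / n : ℝ)) * n, ?_, ?_⟩) (by simpa [dist_eq_norm] using hax)
    · exact Int.isCoprime_iff_gcd_eq_one.2 (by rwa [Int.gcd_natCast_natCast])
    · exact (Int.isCoprime_iff_gcd_eq_one.2 (by rwa [Int.gcd_natCast_natCast])).add_mul_right_left _
    · convert hab using 2; push_cast; field_simp; ring
  · intro a _
    rw [AddCircle.volume_closedBall]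
    exact ENNReal.ofReal_le_ofReal (by linarith [min_le_right (1 : ℝ) (2 * (ψ m / 2))])

lemma card_mul_le_volume_circleA_inter {ψ : ℕ → ℝ} {m n : ℕ} (hn : 0 < n) (hψ : 0 ≤ ψ m)
    (hmn : ψ m ≤ ψ n) (hsmall : ψ m < 1 / (4 * m)) :
    (closeNumerators m n (2 * ψ n)).card * ENNReal.ofReal (2 * ψ m) ≤
      volume (circleA (fun j => 2 * ψ j) m ∩ circleA (fun j => 2 * ψ j) n) := by
  have hm : 0 < m := Nat.pos_of_ne_zero fun h => by subst h; simp at hsmall; linarith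
  have hm1 : (1 : ℝ) ≤ m := by exact_mod_cast hm
  have hw : ∀ a ∈ closeNumerators m n (2 * ψ n), ∃ w : ℝ, |w - a / m| ≤ ψ m ∧
      ∃ b : ℤ, IsCoprime b n ∧ |w - b / n| ≤ 2 * ψ n - ψ m := by
    intro a ha
    obtain ⟨-, -, b, hb, hab⟩ := mem_closeNumerators.1 ha
    obtain ⟨w, hwa, hwb⟩ := exists_abs_sub_le_and_abs_sub_le hψ hmn hab
    exact ⟨w, hwa, b, hb, hwb⟩
  choose! w hwa hwb using hw
  have hnear : ∀ a ∈ closeNumerators m n (2 * ψ n),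
      ∀ x ∈ Metric.closedBall (w a : UnitAddCircle) (ψ m),
        ‖x - ((a / m : ℝ) : UnitAddCircle)‖ ≤ 2 * ψ m := fun a ha x hx => by
    rw [Metric.mem_closedBall, dist_eq_norm] at hx
    linarith [UnitAddCircle.norm_sub_coe_le x (w a) (a / m), hwa a ha]
  refine card_mul_le_measure_of_pairwiseDisjoint
    (f := fun a => Metric.closedBall (w a : UnitAddCircle) (ψ m)) ?_
    (fun _ _ => measurableSet_closedBall) ?_ ?_
  · intro a ha a' ha' hne
    refine Set.disjoint_left.2 fun x hx hx' => ?_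
    obtain ⟨⟨ha1, ham⟩, -⟩ := mem_closeNumerators.1 ha
    obtain ⟨⟨ha1', ham'⟩, -⟩ := mem_closeNumerators.1 ha'
    have hdvd : ¬ (m : ℤ) ∣ a - a' := fun h =>
      hne (sub_eq_zero.1 (Int.eq_zero_of_abs_lt_dvd h (abs_sub_lt_iff.2 ⟨by omega, by omega⟩)))
    have hfar := UnitAddCircle.inv_natCast_le_norm_intCast_div hdvd
    have hclose : ‖(((a - a' : ℤ) / m : ℝ) : UnitAddCircle)‖ ≤ 4 * ψ m := by
      rw [Int.cast_sub, sub_div, AddCircle.coe_sub, ← sub_sub_sub_cancel_left _ _ x]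
      linarith [hnear a ha x hx, hnear a' ha' x hx',
        norm_sub_le (x - ((a' / m : ℝ) : UnitAddCircle)) (x - ((a / m : ℝ) : UnitAddCircle))]
    rw [one_div, mul_inv, ← div_eq_inv_mul] at hsmall
    linarith
  · intro a ha x hx
    obtain ⟨-, hac, -⟩ := mem_closeNumerators.1 ha
    obtain ⟨b, hbc, hwb⟩ := hwb a ha
    refine ⟨mem_circleA_of_intCast hm hac (hnear a ha x hx), mem_circleA_of_intCast hn hbc ?_⟩
    rw [Metric.mem_closedBall, dist_eq_norm] at hx
    linarith [UnitAddCircle.norm_sub_coe_le x (w a) (b / n)]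
  · intro a _
    rw [AddCircle.volume_closedBall, min_eq_right]
    rw [lt_div_iff₀ (by positivity)] at hsmall
    nlinarith

open scoped Classical in
def padicCloseNumerators (p : ℕ) [Fact p.Prime] (m n : ℕ) (r : ℝ) : Finset ℤ :=
  {a ∈ Finset.Icc (-(m : ℤ)) m | IsCoprime a m ∧
    ∃ b : ℤ, |b| ≤ n ∧ IsCoprime b n ∧ ‖(a / m - b / n : ℚ_[p])‖ ≤ r}

section PadicOverlap

variable {p : ℕ} [Fact p.Prime]

lemma mem_padicCloseNumerators {m n : ℕ} {r : ℝ} {a : ℤ} :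
    a ∈ padicCloseNumerators p m n r ↔ (-(m : ℤ) ≤ a ∧ a ≤ m) ∧ IsCoprime a m ∧
      ∃ b : ℤ, |b| ≤ n ∧ IsCoprime b n ∧ ‖(a / m - b / n : ℚ_[p])‖ ≤ r := by
  simp only [padicCloseNumerators, Finset.mem_filter, Finset.mem_Icc]

lemma closedBall_ofDiv_subset_padicE_inter {ψ : ℕ → ℝ} {m n : ℕ} (hm : ¬ p ∣ m)
    (hmn : ψ m ≤ ψ n) {A B : ℤ} (hA : |A| ≤ m) (hAc : IsCoprime A m) (hB : |B| ≤ n)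
    (hBc : IsCoprime B n) (hAB : ‖(A / m - B / n : ℚ_[p])‖ ≤ ψ n) :
    Metric.closedBall (PadicInt.ofDiv A hm) (ψ m) ⊆ padicE p ψ m ∩ padicE p ψ n := by
  intro x hx
  rw [PadicInt.mem_closedBall_ofDiv] at hx
  refine ⟨⟨A, hA, Int.isCoprime_iff_gcd_eq_one.1 hAc, hx⟩,
    ⟨B, hB, Int.isCoprime_iff_gcd_eq_one.1 hBc, ?_⟩⟩
  rw [← sub_add_sub_cancel _ ((A : ℚ_[p]) / m)]
  exact (IsUltrametricDist.norm_add_le_max _ _).trans (max_le (hx.trans hmn) hAB)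

/-- Scaling by `pᵏ` turns `|a/m - b/n| ≤ p⁻ᵏ` into `pᵏ ∣ A n - B m`; a common integer shift
then brings the new numerators into range without changing `A n - B m`. -/
lemma exists_closedBall_ofDiv_subset_padicE_inter {ψ : ℕ → ℝ} {m n k : ℕ} (hm : ¬ p ∣ m)
    (hn : ¬ p ∣ n) (hk : ψ n = ((p : ℝ) ^ k)⁻¹) (hmn : ψ m ≤ ψ n) {a : ℤ}
    (ha : a ∈ closeNumerators m n (ψ n)) :
    ∃ A : ℤ, |A| ≤ m ∧ (m : ℤ) ∣ A - p ^ k * a ∧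
      Metric.closedBall (PadicInt.ofDiv A hm) (ψ m) ⊆ padicE p ψ m ∩ padicE p ψ n := by
  have hp := Fact.out (p := p.Prime)
  have hpk : (0 : ℝ) < (p : ℝ) ^ k := pow_pos (by exact_mod_cast hp.pos) k
  obtain ⟨-, hac, b, hbc, hab⟩ := mem_closeNumerators.1 ha
  rw [hk] at hab
  obtain ⟨t, hA, hB⟩ := exists_int_abs_add_le_one
    (α := ((p ^ k * a : ℤ) : ℝ) / m) (β := ((p ^ k * b : ℤ) : ℝ) / n) <| by
      calc _ = (p : ℝ) ^ k * |(a : ℝ) / m - b / n| := by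
            push_cast; rw [mul_div_assoc, mul_div_assoc, ← mul_sub, abs_mul, abs_of_pos hpk]
        _ ≤ (p : ℝ) ^ k * ((p : ℝ) ^ k)⁻¹ := by gcongr
        _ = 1 := mul_inv_cancel₀ hpk.ne'
  have hAm := abs_add_mul_le_of_abs_div_add_le_one (Nat.pos_of_not_dvd hm) hA
  refine ⟨p ^ k * a + t * m, hAm, ⟨t, by ring⟩, closedBall_ofDiv_subset_padicE_inter hm hmn hAm
    ((hp.isCoprime_natCast_of_not_dvd hm).pow_left.mul_left hac |>.add_mul_right_left t)
    (abs_add_mul_le_of_abs_div_add_le_one (Nat.pos_of_not_dvd hn) hB)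
    ((hp.isCoprime_natCast_of_not_dvd hn).pow_left.mul_left hbc |>.add_mul_right_left t) ?_⟩
  rw [hk, Padic.norm_div_sub_div_le_inv_pow_iff hm hn]
  exact ⟨a * n - b * m, by ring⟩

variable [MeasurableSpace ℤ_[p]] [BorelSpace ℤ_[p]] (μ : Measure ℤ_[p]) [μ.IsAddHaarMeasure]

lemma measure_padicE_inter_le {ψ : ℕ → ℝ} {m n : ℕ} (hm : ¬ p ∣ m) (hmn : ψ m ≤ ψ n) :
    μ (padicE p ψ m ∩ padicE p ψ n) ≤
      (padicCloseNumerators p m n (ψ n)).card * μ (Metric.closedBall 0 (ψ m)) := by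
  refine measure_le_card_mul_of_subset_biUnion
    (f := fun a => Metric.closedBall (PadicInt.ofDiv a hm) (ψ m)) ?_
    (fun a _ => (Measure.addHaar_closedBall_center μ _ _).le)
  rintro x ⟨⟨a, ha, hac, hax⟩, ⟨b, hb, hbc, hbx⟩⟩
  refine Set.mem_biUnion (mem_padicCloseNumerators.2 ⟨abs_le.1 ha,
    Int.isCoprime_iff_gcd_eq_one.2 hac, b, hb, Int.isCoprime_iff_gcd_eq_one.2 hbc, ?_⟩) hax
  rw [← sub_sub_sub_cancel_left _ _ (x : ℚ_[p]), sub_eq_add_neg]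
  refine (IsUltrametricDist.norm_add_le_max _ _).trans (max_le hbx ?_)
  rw [norm_neg]
  exact hax.trans hmn

lemma card_mul_le_measure_padicE_inter [IsProbabilityMeasure μ] {ψ : ℕ → ℝ} {m n j k : ℕ}
    (hm : ¬ p ∣ m) (hn : ¬ p ∣ n) (hj : ψ m = ((p : ℝ) ^ j)⁻¹) (hk : ψ n = ((p : ℝ) ^ k)⁻¹)
    (hmn : ψ m ≤ ψ n) (h2m : 2 * m < p ^ j) :
    (closeNumerators m n (ψ n)).card * ENNReal.ofReal (ψ m) ≤
      μ (padicE p ψ m ∩ padicE p ψ n) := by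
  choose! A hAm hAdvd hAsub using fun a (ha : a ∈ closeNumerators m n (ψ n)) =>
    exists_closedBall_ofDiv_subset_padicE_inter hm hn hk hmn ha
  refine card_mul_le_measure_of_pairwiseDisjoint
    (f := fun a => Metric.closedBall (PadicInt.ofDiv (A a) hm) (ψ m)) ?_
    (fun _ _ => measurableSet_closedBall) hAsub
    (fun a _ => by rw [hj, PadicInt.measure_closedBall_inv_pow])
  intro a ha a' ha' hne
  obtain ⟨⟨ha1, ham⟩, -⟩ := mem_closeNumerators.1 ha
  obtain ⟨⟨ha1', ham'⟩, -⟩ := mem_closeNumerators.1 ha'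
  simp only [hj]
  refine PadicInt.disjoint_closedBall_ofDiv hm (fun heq => hne ?_) ?_
  · have hdvd : (m : ℤ) ∣ (a - a') * p ^ k := by
      obtain ⟨c, hc⟩ := hAdvd a ha
      obtain ⟨c', hc'⟩ := hAdvd a' ha'
      exact ⟨c' - c, by linear_combination hc' - hc + heq⟩
    have hcop := ((Fact.out : p.Prime).isCoprime_natCast_of_not_dvd hm).pow_left (m := k)
    exact sub_eq_zero.1 (Int.eq_zero_of_abs_lt_dvd (hcop.symm.dvd_of_dvd_mul_right hdvd)
      (abs_sub_lt_iff.2 ⟨by omega, by omega⟩))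
  · have h2m' : 2 * (m : ℤ) < p ^ j := by exact_mod_cast h2m
    linarith [abs_sub (A a) (A a'), hAm a ha, hAm a' ha']

end PadicOverlap

section Counting

variable {p : ℕ} [Fact p.Prime]

/-- Multiplying by the inverse `u` of `pᵏ` modulo `m` turns a `p`-adically close pair `a/m, b/n`
into a pair at real distance `p⁻ᵏ |a/m - b/n| ≤ 2 p⁻ᵏ`. -/
lemma exists_mem_closeNumerators_of_mem_padicCloseNumerators {m n k : ℕ} (hm : ¬ p ∣ m)
    (hn : ¬ p ∣ n) {u v : ℤ} (huv : u * p ^ k + v * m = 1) {a : ℤ}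
    (ha : a ∈ padicCloseNumerators p m n ((p : ℝ) ^ k)⁻¹) :
    ∃ a' ∈ closeNumerators m n (2 * ((p : ℝ) ^ k)⁻¹), (m : ℤ) ∣ a' - u * a := by
  have hmpos := Nat.pos_of_not_dvd hm
  have hm0 : (m : ℝ) ≠ 0 := by positivity
  have hn0 : (n : ℝ) ≠ 0 := by have := Nat.pos_of_not_dvd hn; positivity
  have hpk : (0 : ℝ) < (p : ℝ) ^ k := pow_pos (by exact_mod_cast (Fact.out : p.Prime).pos) k
  obtain ⟨⟨ha1, ha2⟩, hac, b, hb, hbc, hab⟩ := mem_padicCloseNumerators.1 ha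
  obtain ⟨c, hc⟩ := (Padic.norm_div_sub_div_le_inv_pow_iff hm hn a b k).1 hab
  obtain ⟨s, hs1, hs2⟩ := exists_add_mul_mem_Icc (by positivity : (0 : ℤ) < m) (u * a)
  set b' := u * b - v * c + s * n
  have hb' : (p : ℤ) ^ k * b' = b + (p ^ k * s - v * a) * n := by
    linear_combination b * huv + v * hc
  have hscale : (p : ℤ) ^ k * ((u * a + s * m) * n - b' * m) = a * n - b * m := by
    linear_combination (a * n - b * m) * huv - v * m * hc
  refine ⟨u * a + s * m, mem_closeNumerators.2 ⟨⟨hs1, hs2⟩,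
    (IsCoprime.mul_left (show IsCoprime u m from ⟨p ^ k, v, by linear_combination huv⟩) hac
      |>.add_mul_right_left s),
    b', ?_, ?_⟩, ⟨s, by ring⟩⟩
  · exact IsCoprime.of_mul_left_right (hb' ▸ hbc.add_mul_right_left _)
  · have hreal : ((u * a + s * m : ℤ) : ℝ) / m - (b' : ℝ) / n =
        ((p : ℝ) ^ k)⁻¹ * ((a : ℝ) / m - b / n) := by
      have h := congrArg (Int.cast : ℤ → ℝ) hscale
      push_cast at h ⊢
      field_simp
      linear_combination h
    rw [hreal, abs_mul, abs_of_pos (inv_pos.2 hpk), mul_comm]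
    gcongr
    linarith [abs_sub ((a : ℝ) / m) (b / n), abs_intCast_div_natCast_le_one (abs_le.2 ⟨ha1, ha2⟩),
      abs_intCast_div_natCast_le_one hb]

/-- An integer in `[-m, m]` is determined by its residue modulo `m` and its quotient by `m`, which
lies in `{-1, 0, 1}`. -/
lemma card_padicCloseNumerators_le {m n : ℕ} (hm : ¬ p ∣ m) (hn : ¬ p ∣ n) (k : ℕ) :
    (padicCloseNumerators p m n ((p : ℝ) ^ k)⁻¹).card ≤
      3 * (closeNumerators m n (2 * ((p : ℝ) ^ k)⁻¹)).card := by
  have hm0 : (0 : ℤ) < m := by exact_mod_cast Nat.pos_of_not_dvd hm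
  obtain ⟨u, v, huv⟩ := ((Fact.out : p.Prime).isCoprime_natCast_of_not_dvd hm).pow_left (m := k)
  have hum : IsCoprime u m := ⟨p ^ k, v, by linear_combination huv⟩
  choose! f hf hfdvd using fun a (ha : a ∈ padicCloseNumerators p m n ((p : ℝ) ^ k)⁻¹) =>
    exists_mem_closeNumerators_of_mem_padicCloseNumerators hm hn huv ha
  calc _ ≤ (closeNumerators m n (2 * ((p : ℝ) ^ k)⁻¹) ×ˢ Finset.Icc (-1 : ℤ) 1).card := by
        refine Finset.card_le_card_of_injOn (fun a => (f a, a / m)) ?_ ?_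
        · intro a ha
          obtain ⟨⟨ha1, ha2⟩, -⟩ := mem_padicCloseNumerators.1 ha
          refine Finset.mem_product.2 ⟨hf a ha, Finset.mem_Icc.2 ⟨?_, ?_⟩⟩
          · exact (Int.le_ediv_iff_mul_le hm0).2 (by linarith)
          · exact (Int.ediv_le_iff_le_mul hm0).2 (by linarith)
        · intro a ha a' ha' h
          obtain ⟨hfa, hq⟩ := Prod.mk.inj h
          have hdvd : (m : ℤ) ∣ (a' - a) * u := by
            obtain ⟨c, hc⟩ := hfdvd a ha
            obtain ⟨c', hc'⟩ := hfdvd a' ha'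
            exact ⟨c - c', by linear_combination hc - hc' - hfa⟩
          have hmod : a ≡ a' [ZMOD m] := Int.modEq_iff_dvd.2 (hum.symm.dvd_of_dvd_mul_right hdvd)
          rw [← Int.emod_add_mul_ediv a m, ← Int.emod_add_mul_ediv a' m, hmod, hq]
    _ = 3 * (closeNumerators m n (2 * ((p : ℝ) ^ k)⁻¹)).card := by
        rw [Finset.card_product, mul_comm]; rfl

end Counting

theorem stmt13_general (p : ℕ) [Fact p.Prime] [MeasurableSpace ℤ_[p]] [BorelSpace ℤ_[p]]
    (μ : Measure ℤ_[p]) [μ.IsAddHaarMeasure] [IsProbabilityMeasure μ]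
    (ψ : ℕ → ℝ)
    (hval : ∀ n : ℕ, ψ n = 0 ∨ ∃ j : ℕ, ψ n = ((p : ℝ) ^ j)⁻¹)
    (hsmall : ∀ n : ℕ, 0 < n → ψ n < 1 / (4 * (n : ℝ)))
    (m n : ℕ) (hm : ¬ p ∣ m) (hn : ¬ p ∣ n) :
    volume (circleA (fun j => ψ j / 2) m ∩ circleA (fun j => ψ j / 2) n) ≤
        μ (padicE p ψ m ∩ padicE p ψ n) ∧
      μ (padicE p ψ m ∩ padicE p ψ n) ≤
        (3 / 2) * volume (circleA (fun j => 2 * ψ j) m ∩ circleA (fun j => 2 * ψ j) n) := by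
  wlog hmn : ψ m ≤ ψ n generalizing m n
  · simpa only [Set.inter_comm] using this n m hn hm (le_of_not_ge hmn)
  have hcircle := volume_circleA_inter_le hmn
  have hpadic := measure_padicE_inter_le μ hm hmn
  rcases hval m with hψm | ⟨j, hj⟩
  · rw [hψm, Metric.closedBall_zero, measure_singleton, mul_zero] at hpadic
    rw [hψm, ENNReal.ofReal_zero, mul_zero] at hcircle
    exact ⟨hcircle.trans zero_le, hpadic.trans zero_le⟩
  have hp := (Fact.out : p.Prime).pos
  have hψm : 0 < ψ m := hj ▸ inv_pos.2 (pow_pos (Nat.cast_pos.2 hp) j)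
  obtain ⟨k, hk⟩ := (hval n).resolve_left (hψm.trans_le hmn).ne'
  have hsmall_m := hsmall m (Nat.pos_of_not_dvd hm)
  refine ⟨hcircle.trans (card_mul_le_measure_padicE_inter μ hm hn hj hk hmn
    (two_mul_lt_pow_of_inv_pow_lt hp (Nat.pos_of_not_dvd hm) (hj ▸ hsmall_m))), ?_⟩
  rw [hj, PadicInt.measure_closedBall_inv_pow, ← hj, hk] at hpadic
  calc _ ≤ _ := hpadic
    _ ≤ ((3 * (closeNumerators m n (2 * ψ n)).card : ℕ) : ℝ≥0∞) * ENNReal.ofReal (ψ m) := by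
        rw [hk]; gcongr; exact card_padicCloseNumerators_le hm hn k
    _ = 3 / 2 * ((closeNumerators m n (2 * ψ n)).card * ENNReal.ofReal (2 * ψ m)) := by
        rw [ENNReal.ofReal_mul zero_le_two, ENNReal.ofReal_ofNat, Nat.cast_mul, Nat.cast_ofNat,
          mul_left_comm (_ : ℝ≥0∞) 2, ← mul_assoc (3 / 2),
          ENNReal.div_mul_cancel two_ne_zero ENNReal.ofNat_ne_top, mul_assoc]
    _ ≤ _ := by
        gcongr
        exact card_mul_le_volume_circleA_inter (Nat.pos_of_not_dvd hn) hψm.le hmn hsmall_m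

/-- **Lemma 3 (Haynes): overlap estimates.** Suppose `ψ` takes values in
`{0} ∪ {p^(-j) : j ∈ ℕ}` and `ψ(n) < 1/(4n)` for all `n ≥ 1`.  Then for all `m, n`
not divisible by `p`,
`λ(A_m(ψ/2) ∩ A_n(ψ/2)) ≤ μ_p(E_m(ψ) ∩ E_n(ψ)) ≤ (3/2)·λ(A_m(2ψ) ∩ A_n(2ψ))`. -/
theorem stmt13 (p : ℕ) [Fact p.Prime] [MeasurableSpace ℤ_[p]] [BorelSpace ℤ_[p]]
    (μ : Measure ℤ_[p]) [μ.IsAddHaarMeasure] [IsProbabilityMeasure μ]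
    (ψ : ℕ → ℝ) (hψ : ∀ n, 0 ≤ ψ n)
    (hval : ∀ n : ℕ, ψ n = 0 ∨ ∃ j : ℕ, ψ n = ((p : ℝ) ^ j)⁻¹)
    (hsmall : ∀ n : ℕ, 0 < n → ψ n < 1 / (4 * (n : ℝ)))
    (m n : ℕ) (hm : ¬ p ∣ m) (hn : ¬ p ∣ n) :
    volume (circleA (fun j => ψ j / 2) m ∩ circleA (fun j => ψ j / 2) n) ≤
        μ (padicE p ψ m ∩ padicE p ψ n) ∧
      μ (padicE p ψ m ∩ padicE p ψ n) ≤
        (3 / 2) * volume (circleA (fun j => 2 * ψ j) m ∩ circleA (fun j => 2 * ψ j) n) :=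
  stmt13_general p μ ψ hval hsmall m n hm hn
end
end

section
/- Let p be a prime and let ψ : ℕ → ℝ be a non-negative function taking values in the set {0} ∪ {p^{−j} : j ≥ 0 an integer}. If n ∈ ℕ satisfies p ∤ n and 1/n ≤ ψ(n) < 1/(12·φ(n)), where φ is Euler's totient function, then μ_p(E_n(ψ)) ≥ φ(n)·ψ(n). -/
open MeasureTheory Filter

noncomputable section

/-- `W_p(ψ)`: the points of `ℤ_p` lying in infinitely many of the sets `E_n(ψ)`. -/
def padicW (p : ℕ) [Fact p.Prime] (ψ : ℕ → ℝ) : Set ℤ_[p] :=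
  {x | {n : ℕ | x ∈ padicE p ψ n}.Infinite}

/-!
Write `ψ(n) = p⁻ʲ` and `q = pʲ`. Since `n` is a `p`-adic unit, the whole residue class of
`a · n⁻¹` modulo `q` lies in the ball `|x - a/n|_p ≤ p⁻ʲ`, and each residue class modulo `q` has
Haar measure `1/q`. So it suffices that the set `A` of integers `a ∈ [-n, n]` coprime to `n`, which
has at least `2φ(n)` elements, meets at least `φ(n)` classes modulo `q`.

By Cauchy–Schwarz, `#A² ≤ #(classes met) · #{(a, b) ∈ A² | a ≡ b mod q}`. Writing `b = a + kq`
with `|k| ≤ 2n/q`, a sieve over the primes `r ∣ n` (`a` and `a + kq` must avoid two residues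
modulo each `r`, or one if `r ∣ k`) bounds the number of such pairs by
`3φ(n) + 12φ(n)²/q ≤ 4φ(n)`, which forces at least `φ(n)` classes.
-/

open Finset

namespace PadicInt

variable {p : ℕ} [Fact p.Prime]

theorem toZModPow_surjective (j : ℕ) : Function.Surjective (toZModPow (p := p) j) :=
  fun s => ⟨((s.cast : ℤ) : ℤ_[p]), by rw [map_intCast, ZMod.intCast_zmod_cast]⟩

theorem preimage_toZModPow_singleton (j : ℕ) (c : ℤ_[p]) :
    toZModPow j ⁻¹' {toZModPow j c} = Metric.closedBall c ((p : ℝ) ^ (-(j : ℤ))) := by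
  ext x
  rw [Set.mem_preimage, Set.mem_singleton_iff, Metric.mem_closedBall, dist_eq_norm,
    norm_le_pow_iff_mem_span_pow, ← ker_toZModPow, RingHom.mem_ker, map_sub, sub_eq_zero]

theorem measure_preimage_toZModPow [MeasurableSpace ℤ_[p]] [BorelSpace ℤ_[p]]
    (μ : Measure ℤ_[p]) [μ.IsAddHaarMeasure] [IsProbabilityMeasure μ] (j : ℕ)
    (t : Finset (ZMod (p ^ j))) : μ (toZModPow j ⁻¹' t) = #t / (p ^ j : ℕ) := by
  set ball₀ := Metric.closedBall (0 : ℤ_[p]) ((p : ℝ) ^ (-(j : ℤ)))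
  have hfiber (s : ZMod (p ^ j)) :
      MeasurableSet (toZModPow j ⁻¹' {s}) ∧ μ (toZModPow j ⁻¹' {s}) = μ ball₀ := by
    obtain ⟨c, rfl⟩ := toZModPow_surjective j s
    rw [preimage_toZModPow_singleton]
    exact ⟨measurableSet_closedBall, Measure.addHaar_closedBall_center μ c _⟩
  have hunion (t : Finset (ZMod (p ^ j))) : μ (toZModPow j ⁻¹' t) = #t * μ ball₀ := by
    rw [← Set.biUnion_preimage_singleton, set_biUnion_coe, measure_biUnion_finset
      ((Set.pairwiseDisjoint_fiber _ Set.univ).subset (Set.subset_univ _)) fun s _ => (hfiber s).1]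
    rw [sum_congr rfl fun s _ => (hfiber s).2, sum_const, nsmul_eq_mul]
  have htotal : μ ball₀ * (p ^ j : ℕ) = 1 := by
    simpa [ZMod.card, mul_comm] using (hunion univ).symm
  rw [hunion, ENNReal.eq_inv_of_mul_eq_one_left htotal, div_eq_mul_inv]

theorem norm_sub_div_le_of_toZModPow_mul_eq {n : ℕ} (hn : ¬ p ∣ n) {j : ℕ} {x : ℤ_[p]} {a : ℤ}
    (h : toZModPow j x * n = a) : ‖(x : ℚ_[p]) - a / n‖ ≤ (p : ℝ) ^ (-(j : ℤ)) := by
  have hn1 : ‖(n : ℚ_[p])‖ = 1 :=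
    Padic.norm_natCast_eq_one_iff.mpr ((Nat.Prime.coprime_iff_not_dvd Fact.out).mpr hn)
  have hn0 : (n : ℚ_[p]) ≠ 0 := norm_ne_zero_iff.mp (by rw [hn1]; exact one_ne_zero)
  have hball : x * n ∈ Metric.closedBall (a : ℤ_[p]) ((p : ℝ) ^ (-(j : ℤ))) := by
    rw [← preimage_toZModPow_singleton, Set.mem_preimage, map_mul, map_natCast, map_intCast, h]
    rfl
  rw [Metric.mem_closedBall, dist_eq_norm, ← padic_norm_e_of_padicInt] at hball
  calc ‖(x : ℚ_[p]) - a / n‖ = ‖((x * n - a : ℤ_[p]) : ℚ_[p])‖ / ‖(n : ℚ_[p])‖ := by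
        rw [← norm_div]; push_cast; field_simp
    _ ≤ (p : ℝ) ^ (-(j : ℤ)) := by rwa [hn1, div_one]

end PadicInt

theorem sq_card_le_card_image_mul_card_collisions {α β : Type*} [DecidableEq α] [DecidableEq β]
    (s : Finset α) (f : α → β) :
    #s ^ 2 ≤ #(s.image f) * #{x ∈ s ×ˢ s | f x.1 = f x.2} := by
  have hpairs : #{x ∈ s ×ˢ s | f x.1 = f x.2} = ∑ b ∈ s.image f, #{a ∈ s | f a = b} ^ 2 := by
    rw [card_eq_sum_card_fiberwise (f := fun x => f x.1) (t := s.image f)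
      fun x hx => mem_image_of_mem f (mem_product.mp (mem_filter.mp hx).1).1]
    refine sum_congr rfl fun b _ => ?_
    rw [sq, ← card_product]
    congr 1
    ext ⟨a, a'⟩
    simp only [mem_filter, mem_product]
    constructor
    · rintro ⟨⟨⟨ha, ha'⟩, hf⟩, rfl⟩
      exact ⟨⟨ha, rfl⟩, ha', hf.symm⟩
    · rintro ⟨⟨ha, rfl⟩, ha', hf⟩
      exact ⟨⟨⟨ha, ha'⟩, hf.symm⟩, rfl⟩
  rw [hpairs, card_eq_sum_card_image f s]
  exact sq_sum_le_card_mul_sum_sq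

theorem card_modEq_pairs_le_sum_card_shift {A : Finset ℤ} {n q : ℕ} (hA : A ⊆ Icc (-(n : ℤ)) n)
    (hq : 0 < q) :
    #{x ∈ A ×ˢ A | (x.1 : ZMod q) = x.2} ≤
      ∑ k ∈ Icc (-((2 * n / q : ℕ) : ℤ)) (2 * n / q : ℕ), #{a ∈ A | a + k * q ∈ A} := by
  rw [← card_sigma]
  refine (card_le_card ?_).trans (card_image_le (f := fun x : (_ : ℤ) × ℤ => (x.2, x.2 + x.1 * q)))
  rintro ⟨a, b⟩ hab
  simp only [mem_filter, mem_product, ZMod.intCast_eq_intCast_iff_dvd_sub] at hab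
  obtain ⟨⟨ha, hb⟩, k, hk⟩ := hab
  have hbound : |(k * q : ℤ)| ≤ 2 * n := by
    have := hA ha; have := hA hb
    simp only [mem_Icc] at *
    rw [abs_le]; constructor <;> linarith
  have hqZ : (0 : ℤ) < q := by exact_mod_cast hq
  rw [abs_le] at hbound
  refine mem_image.mpr ⟨⟨k, a⟩, mem_sigma.mpr ⟨mem_Icc.mpr ⟨?_, ?_⟩, mem_filter.mpr ⟨ha, ?_⟩⟩, ?_⟩
  · rw [neg_le, Int.natCast_ediv, Int.le_ediv_iff_mul_le hqZ]
    push_cast; linarith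
  · rw [Int.natCast_ediv, Int.le_ediv_iff_mul_le hqZ]
    push_cast; linarith
  · rwa [show a + k * q = b by linarith]
  · simp only [Prod.mk.injEq, true_and]; linarith

theorem card_filter_Icc_emod_mem_le {P : Finset ℕ} (hP : ∀ r ∈ P, r.Prime) (lo : ℤ) (L : ℕ)
    (V : ℕ → Finset ℤ) :
    #{a ∈ Icc lo (lo + L) | ∀ r ∈ P, a % (r : ℤ) ∈ V r} ≤
      (L / ∏ r ∈ P, r + 1) * ∏ r ∈ P, #(V r) := by
  set R := ∏ r ∈ P, r
  have hR : (0 : ℤ) < R := by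
    exact_mod_cast prod_pos fun r hr => (hP r hr).pos
  rw [← card_range (L / R + 1), ← card_pi, ← card_product]
  -- `a` is determined by its block `(a - lo) / R` and by its residues modulo the primes of `P`.
  refine card_le_card_of_injOn (fun a => (((a - lo) / R).toNat, fun r _ => a % (r : ℤ))) ?_ ?_
  · intro a ha
    simp only [coe_filter, mem_Icc, Set.mem_ofPred_eq] at ha
    have hq : (a - lo) / R ≤ (L : ℤ) / R := Int.ediv_le_ediv hR (by linarith)
    have hq0 : 0 ≤ (a - lo) / R := Int.ediv_nonneg (by linarith) hR.le
    rw [← Int.natCast_ediv] at hq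
    simp only [coe_product, Set.mem_prod, mem_coe, mem_range]
    exact ⟨by omega, Finset.mem_pi.mpr ha.2⟩
  · intro a ha b hb hab
    simp only [coe_filter, mem_Icc, Set.mem_ofPred_eq] at ha hb
    simp only [Prod.mk.injEq, funext_iff] at hab
    obtain ⟨hquot, hrem⟩ := hab
    have hdvd : (R : ℤ) ∣ b - a := by
      refine Int.natCast_dvd.mpr (prod_primes_dvd _ (fun r hr => (hP r hr).prime) fun r hr => ?_)
      exact Int.natCast_dvd.mp (Int.ModEq.dvd (hrem r hr))
    have hmod : (a - lo) % R = (b - lo) % R :=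
      Int.modEq_iff_dvd.mpr (by rwa [sub_sub_sub_cancel_right])
    have hq0 : 0 ≤ (a - lo) / R := Int.ediv_nonneg (by linarith) hR.le
    have hq0' : 0 ≤ (b - lo) / R := Int.ediv_nonneg (by linarith) hR.le
    have h1 := Int.mul_ediv_add_emod (a - lo) R
    have h2 := Int.mul_ediv_add_emod (b - lo) R
    have : (a - lo) / R = (b - lo) / R := by omega
    rw [this, hmod] at h1
    linarith

theorem card_filter_not_dvd_not_dvd_add_le {r : ℕ} (hr : 0 < r) (c : ℤ) :
    #{v ∈ Ico (0 : ℤ) r | ¬ (r : ℤ) ∣ v ∧ ¬ (r : ℤ) ∣ v + c} ≤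
      r - 2 + if (r : ℤ) ∣ c then 1 else 0 := by
  have hr' : (0 : ℤ) < r := by exact_mod_cast hr
  have h0 : (0 : ℤ) ∈ Ico (0 : ℤ) r := by simp [hr]
  have hsub : {v ∈ Ico (0 : ℤ) r | ¬ (r : ℤ) ∣ v ∧ ¬ (r : ℤ) ∣ v + c} ⊆ (Ico (0 : ℤ) r).erase 0 :=
    fun v hv => by
      simp only [mem_filter] at hv
      exact mem_erase.mpr ⟨by rintro rfl; exact hv.2.1 (dvd_zero _), hv.1⟩
  split_ifs with hc
  · calc _ ≤ #((Ico (0 : ℤ) r).erase 0) := card_le_card hsub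
      _ = r - 1 := by rw [card_erase_of_mem h0, Int.card_Ico]; simp
      _ ≤ r - 2 + 1 := by omega
  · set w := (-c) % r
    have hwc : (r : ℤ) ∣ w + c := by
      rw [← dvd_neg, neg_add, ← sub_eq_neg_add]
      exact (Int.mod_modEq (-c) r).dvd
    have hw : w ∈ (Ico (0 : ℤ) r).erase 0 := by
      refine mem_erase.mpr ⟨fun hw0 => hc ?_,
        mem_Ico.mpr ⟨Int.emod_nonneg _ hr'.ne', Int.emod_lt_of_pos _ hr'⟩⟩
      rwa [hw0, zero_add] at hwc
    calc _ ≤ #(((Ico (0 : ℤ) r).erase 0).erase w) := by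
          refine card_le_card fun v hv => mem_erase.mpr ⟨?_, hsub hv⟩
          rintro rfl
          exact (mem_filter.mp hv).2.2 hwc
      _ = r - 2 := by rw [card_erase_of_mem hw, card_erase_of_mem h0, Int.card_Ico]; omega
      _ ≤ r - 2 + 0 := le_rfl

theorem sum_Icc_neg_natAbs {M : Type*} [AddCommMonoid M] (f : ℕ → M) (K : ℕ) :
    ∑ k ∈ Icc (-(K : ℤ)) K, f k.natAbs = f 0 + 2 • ∑ m ∈ Ioc 0 K, f m := by
  induction K with
  | zero => simp
  | succ K ih =>
    have hIcc : Icc (-((K + 1 : ℕ) : ℤ)) (K + 1 : ℕ) =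
        insert (-((K + 1 : ℕ) : ℤ)) (insert ((K + 1 : ℕ) : ℤ) (Icc (-(K : ℤ)) K)) := by
      ext k; simp only [mem_Icc, mem_insert]; omega
    rw [hIcc, sum_insert (by simp only [mem_insert, mem_Icc]; omega),
      sum_insert (by simp only [mem_Icc]; omega), ih, sum_Ioc_succ_top (Nat.zero_le K)]
    simp only [Int.natAbs_neg, Int.natAbs_natCast, smul_add, two_nsmul]
    abel

-- The number of residues `a` modulo `∏ P` with `a` and `a + m` both prime to every `r ∈ P`.
def sieveWeight (P : Finset ℕ) (m : ℕ) : ℕ := ∏ r ∈ P, (r - 2 + if r ∣ m then 1 else 0)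

theorem sieveWeight_zero {P : Finset ℕ} (hP : ∀ r ∈ P, r.Prime) :
    sieveWeight P 0 = ∏ r ∈ P, (r - 1) :=
  prod_congr rfl fun r hr => by have := (hP r hr).two_le; simp only [dvd_zero, if_true]; omega

theorem sum_Ioc_sieveWeight_le {P : Finset ℕ} (hP : ∀ r ∈ P, r.Prime) (K : ℕ) :
    ∑ m ∈ Ioc 0 K, (sieveWeight P m : ℝ) ≤ K * ∏ r ∈ P, ((r : ℝ) - 1) ^ 2 / r := by
  have hr2 (r) (hr : r ∈ P) : (2 : ℝ) ≤ r := by exact_mod_cast (hP r hr).two_le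
  -- Expand the product over subsets `t ⊆ P`; the `t`-term only sees the multiples of `∏ t`.
  have hexpand (m : ℕ) : (sieveWeight P m : ℝ) =
      ∑ t ∈ P.powerset, (if ∏ r ∈ t, r ∣ m then 1 else 0) * ∏ r ∈ P \ t, ((r : ℝ) - 2) := by
    rw [sieveWeight, Nat.cast_prod]
    rw [prod_congr rfl fun r hr => show ((r - 2 + if r ∣ m then 1 else 0 : ℕ) : ℝ) =
      (if r ∣ m then 1 else 0) + ((r : ℝ) - 2) by
        rw [Nat.cast_add, Nat.cast_sub (hP r hr).two_le]; push_cast; ring]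
    rw [prod_add]
    refine sum_congr rfl fun t ht => ?_
    rw [prod_boole]
    congr 2
    exact propext ⟨prod_primes_dvd m (fun r hr => (hP r (mem_powerset.mp ht hr)).prime),
      fun h r hr => (dvd_prod_of_mem _ hr).trans h⟩
  have hcount (d : ℕ) : ∑ m ∈ Ioc 0 K, (if d ∣ m then 1 else 0 : ℝ) ≤ K / d := by
    rw [sum_boole, Nat.Ioc_filter_dvd_card_eq_div]
    exact Nat.cast_div_le
  calc ∑ m ∈ Ioc 0 K, (sieveWeight P m : ℝ)
      = ∑ t ∈ P.powerset, (∑ m ∈ Ioc 0 K, if ∏ r ∈ t, r ∣ m then 1 else 0) *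
          ∏ r ∈ P \ t, ((r : ℝ) - 2) := by
        simp_rw [hexpand, sum_mul]; exact sum_comm
    _ ≤ ∑ t ∈ P.powerset, K / (∏ r ∈ t, r : ℕ) * ∏ r ∈ P \ t, ((r : ℝ) - 2) := by
        refine sum_le_sum fun t _ => mul_le_mul_of_nonneg_right (hcount _) ?_
        exact prod_nonneg fun r hr => sub_nonneg.mpr (hr2 r (mem_sdiff.mp hr).1)
    _ = K * ∏ r ∈ P, ((r : ℝ)⁻¹ + ((r : ℝ) - 2)) := by
        rw [prod_add, mul_sum]
        refine sum_congr rfl fun t ht => ?_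
        rw [Nat.cast_prod, prod_inv_distrib, div_eq_mul_inv, mul_assoc]
    _ = K * ∏ r ∈ P, ((r : ℝ) - 1) ^ 2 / r := by
        congr 1
        refine prod_congr rfl fun r hr => ?_
        have : (r : ℝ) ≠ 0 := by linarith [hr2 r hr]
        field_simp
        ring

def coprimesIcc (n : ℕ) : Finset ℤ := {a ∈ Icc (-(n : ℤ)) n | Int.gcd a n = 1}

theorem two_mul_totient_le_card_coprimesIcc (n : ℕ) : 2 * n.totient ≤ #(coprimesIcc n) := by
  set T := {m ∈ Ico 1 (1 + n) | n.Coprime m}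
  have hpos : T.image (Nat.cast : ℕ → ℤ) ⊆ {a ∈ coprimesIcc n | 0 < a} := by
    intro a ha
    obtain ⟨m, hm, rfl⟩ := mem_image.mp ha
    simp only [T, mem_filter, mem_Ico] at hm
    simp only [coprimesIcc, mem_filter, mem_Icc, Int.gcd_natCast_natCast]
    exact ⟨⟨⟨by omega, by omega⟩, Nat.coprime_comm.mp hm.2⟩, by omega⟩
  have hneg : T.image (fun m : ℕ => -(m : ℤ)) ⊆ {a ∈ coprimesIcc n | ¬ 0 < a} := by
    intro a ha
    obtain ⟨m, hm, rfl⟩ := mem_image.mp ha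
    have hm := hpos (mem_image_of_mem _ hm)
    simp only [coprimesIcc, mem_filter, mem_Icc, Int.neg_gcd] at hm ⊢
    omega
  calc 2 * n.totient = #(T.image (Nat.cast : ℕ → ℤ)) + #(T.image (fun m : ℕ => -(m : ℤ))) := by
        rw [card_image_of_injective _ Nat.cast_injective,
          card_image_of_injective _ fun _ _ h => by simpa using h,
          Nat.filter_coprime_Ico_eq_totient, two_mul]
    _ ≤ #{a ∈ coprimesIcc n | 0 < a} + #{a ∈ coprimesIcc n | ¬ 0 < a} :=
        add_le_add (card_le_card hpos) (card_le_card hneg)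
    _ = #(coprimesIcc n) := card_filter_add_card_filter_not _

theorem not_dvd_of_gcd_eq_one_of_mem_primeFactors {a : ℤ} {n r : ℕ} (ha : Int.gcd a n = 1)
    (hr : r ∈ n.primeFactors) :
    ¬ (r : ℤ) ∣ a := fun hdvd =>
  (Nat.prime_of_mem_primeFactors hr).ne_one <| Int.isUnit_iff_natAbs_eq.mp <|
    (Int.isCoprime_iff_gcd_eq_one.mpr ha).isUnit_of_dvd' hdvd
      (Int.natCast_dvd_natCast.mpr (Nat.dvd_of_mem_primeFactors hr))

theorem card_filter_add_mem_coprimesIcc_le (n : ℕ) (c : ℤ) :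
    #{a ∈ coprimesIcc n | a + c ∈ coprimesIcc n} ≤ (2 * n / ∏ r ∈ n.primeFactors, r + 1) *
      ∏ r ∈ n.primeFactors, (r - 2 + if (r : ℤ) ∣ c then 1 else 0) := by
  set V : ℕ → Finset ℤ := fun r => {v ∈ Ico (0 : ℤ) r | ¬ (r : ℤ) ∣ v ∧ ¬ (r : ℤ) ∣ v + c}
  have hsub : {a ∈ coprimesIcc n | a + c ∈ coprimesIcc n} ⊆
      {a ∈ Icc (-(n : ℤ)) (-n + (2 * n : ℕ)) | ∀ r ∈ n.primeFactors, a % (r : ℤ) ∈ V r} := by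
    intro a ha
    simp only [coprimesIcc, mem_filter, mem_Icc] at ha
    obtain ⟨⟨⟨ha1, ha2⟩, hacop⟩, -, hacop'⟩ := ha
    refine mem_filter.mpr ⟨mem_Icc.mpr ⟨ha1, by push_cast; linarith⟩, fun r hr => ?_⟩
    have hr0 : (0 : ℤ) < r := by exact_mod_cast (Nat.prime_of_mem_primeFactors hr).pos
    have hmod := Int.mod_modEq a r
    refine mem_filter.mpr
      ⟨mem_Ico.mpr ⟨Int.emod_nonneg _ hr0.ne', Int.emod_lt_of_pos _ hr0⟩, ?_, ?_⟩
    · rw [hmod.dvd_iff]; exact not_dvd_of_gcd_eq_one_of_mem_primeFactors hacop hr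
    · rw [(hmod.add_right c).dvd_iff]; exact not_dvd_of_gcd_eq_one_of_mem_primeFactors hacop' hr
  refine (card_le_card hsub).trans ((card_filter_Icc_emod_mem_le
    (fun r hr => Nat.prime_of_mem_primeFactors hr) _ _ V).trans ?_)
  gcongr with r hr
  exact card_filter_not_dvd_not_dvd_add_le (Nat.prime_of_mem_primeFactors hr).pos c

theorem card_filter_add_mul_mem_coprimesIcc_le {n q : ℕ} (hcop : q.Coprime n) (k : ℤ) :
    #{a ∈ coprimesIcc n | a + k * q ∈ coprimesIcc n} ≤
      (2 * n / ∏ r ∈ n.primeFactors, r + 1) * sieveWeight n.primeFactors k.natAbs := by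
  refine (card_filter_add_mem_coprimesIcc_le n (k * q)).trans_eq (congrArg _ (prod_congr rfl ?_))
  intro r hr
  have hrq : ¬ (r : ℤ) ∣ q := fun h => (Nat.prime_of_mem_primeFactors hr).ne_one <|
    Nat.eq_one_of_dvd_one <| hcop ▸ Nat.dvd_gcd (Int.natCast_dvd_natCast.mp h)
      (Nat.dvd_of_mem_primeFactors hr)
  simp_rw [(Nat.prime_iff_prime_int.mp (Nat.prime_of_mem_primeFactors hr)).dvd_mul,
    or_iff_left hrq, Int.natCast_dvd]

theorem sieveWeight_primeFactors_sum_le {n : ℕ} (hn : 0 < n) (K : ℕ) :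
    ((2 * n / ∏ r ∈ n.primeFactors, r + 1 : ℕ) : ℝ) * (sieveWeight n.primeFactors 0 +
      2 * ∑ m ∈ Ioc 0 K, (sieveWeight n.primeFactors m : ℝ)) ≤
      3 * n.totient + 6 * n.totient ^ 2 * K / n := by
  set P := n.primeFactors
  set R : ℕ := ∏ r ∈ P, r
  have hP : ∀ r ∈ P, r.Prime := fun r hr => Nat.prime_of_mem_primeFactors hr
  have hn0 : (n : ℝ) ≠ 0 := by positivity
  have hR0 : (0 : ℝ) < R := by exact_mod_cast prod_pos fun r hr => (hP r hr).pos
  have hR : (R : ℝ) ≤ n := by exact_mod_cast Nat.le_of_dvd hn (Nat.prod_primeFactors_dvd n)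
  have hcastR : ∏ r ∈ P, (r : ℝ) = R := by simp only [R, Nat.cast_prod]
  have hprod : ∏ r ∈ P, ((r : ℝ) - 1) = n.totient * R / n := by
    have h : (n.totient : ℝ) * R = n * ∏ r ∈ P, ((r : ℝ) - 1) := by
      rw [← prod_congr rfl fun r hr => Nat.cast_pred (hP r hr).pos, ← Nat.cast_prod]
      exact_mod_cast Nat.totient_mul_prod_primeFactors n
    rw [eq_div_iff hn0, h, mul_comm]
  have hB : ((2 * n / R + 1 : ℕ) : ℝ) ≤ 3 * n / R := by
    have h1 : (1 : ℝ) ≤ n / R := (one_le_div hR0).mpr hR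
    have h2 : ((2 * n / R : ℕ) : ℝ) ≤ 2 * n / R := by exact_mod_cast Nat.cast_div_le
    push_cast
    linarith [show (3 : ℝ) * n / R = 2 * n / R + n / R by ring]
  have hW0 : (sieveWeight P 0 : ℝ) = n.totient * R / n := by
    rw [sieveWeight_zero hP, Nat.cast_prod,
      prod_congr rfl fun r hr => Nat.cast_pred (hP r hr).pos, hprod]
  have hW : ∑ m ∈ Ioc 0 K, (sieveWeight P m : ℝ) ≤ K * (n.totient ^ 2 * R / n ^ 2) := by
    refine (sum_Ioc_sieveWeight_le hP K).trans_eq ?_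
    rw [prod_div_distrib, prod_pow, hprod, hcastR]
    field_simp
  have hnonneg : (0 : ℝ) ≤ sieveWeight P 0 + 2 * ∑ m ∈ Ioc 0 K, (sieveWeight P m : ℝ) :=
    add_nonneg (Nat.cast_nonneg _)
      (mul_nonneg zero_le_two (sum_nonneg fun _ _ => Nat.cast_nonneg _))
  calc _ ≤ (3 : ℝ) * n / R * (n.totient * R / n + 2 * (K * (n.totient ^ 2 * R / n ^ 2))) :=
        mul_le_mul hB (by rw [hW0]; linarith) hnonneg (by positivity)
    _ = 3 * n.totient + 6 * n.totient ^ 2 * K / n := by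
        field_simp; ring

theorem card_modEq_pairs_coprimesIcc_le {n q : ℕ} (hq : 12 * n.totient ≤ q)
    (hcop : q.Coprime n) :
    #{x ∈ coprimesIcc n ×ˢ coprimesIcc n | (x.1 : ZMod q) = x.2} ≤ 4 * n.totient := by
  rcases Nat.eq_zero_or_pos n with rfl | hn
  · simp +contextual [coprimesIcc]
  set P := n.primeFactors
  set K := 2 * n / q
  have hq0 : 0 < q := by linarith [Nat.totient_pos.mpr hn]
  have hcount : #{x ∈ coprimesIcc n ×ˢ coprimesIcc n | (x.1 : ZMod q) = x.2} ≤
      (2 * n / ∏ r ∈ P, r + 1) * (sieveWeight P 0 + 2 * ∑ m ∈ Ioc 0 K, sieveWeight P m) := by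
    calc _ ≤ ∑ k ∈ Icc (-(K : ℤ)) K, #{a ∈ coprimesIcc n | a + k * q ∈ coprimesIcc n} :=
          card_modEq_pairs_le_sum_card_shift (filter_subset _ _) hq0
      _ ≤ ∑ k ∈ Icc (-(K : ℤ)) K, (2 * n / ∏ r ∈ P, r + 1) * sieveWeight P k.natAbs :=
          sum_le_sum fun k _ => card_filter_add_mul_mem_coprimesIcc_le hcop k
      _ = _ := by rw [← mul_sum, sum_Icc_neg_natAbs, smul_eq_mul]
  have hK : 6 * (n.totient : ℝ) ^ 2 * K / n ≤ n.totient := by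
    have hKq : (K : ℝ) * q ≤ 2 * n := by
      exact_mod_cast Nat.div_mul_le_self (2 * n) q
    have hqR : 12 * (n.totient : ℝ) ≤ q := by exact_mod_cast hq
    rw [div_le_iff₀ (by positivity)]
    nlinarith [show (0 : ℝ) ≤ n.totient * K by positivity]
  have hC : (#{x ∈ coprimesIcc n ×ˢ coprimesIcc n | (x.1 : ZMod q) = x.2} : ℝ) ≤ 4 * n.totient :=
    calc _ ≤ ((2 * n / ∏ r ∈ P, r + 1 : ℕ) : ℝ) *
          (sieveWeight P 0 + 2 * ∑ m ∈ Ioc 0 K, (sieveWeight P m : ℝ)) := by exact_mod_cast hcount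
      _ ≤ 3 * n.totient + 6 * n.totient ^ 2 * K / n := sieveWeight_primeFactors_sum_le hn K
      _ ≤ 4 * n.totient := by linarith
  exact_mod_cast hC

theorem totient_le_card_image_coprimesIcc {n q : ℕ} (hq : 12 * n.totient ≤ q)
    (hcop : q.Coprime n) : n.totient ≤ #((coprimesIcc n).image (Int.cast : ℤ → ZMod q)) := by
  have hA := two_mul_totient_le_card_coprimesIcc n
  have hC := card_modEq_pairs_coprimesIcc_le hq hcop
  have hCS := sq_card_le_card_image_mul_card_collisions (coprimesIcc n) (Int.cast : ℤ → ZMod q)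
  -- `(2φ)² ≤ #A² ≤ #(image) · 4φ`
  by_contra! h
  nlinarith

theorem card_image_mul_inv_natCast {n q : ℕ} (hcop : q.Coprime n) (A : Finset ℤ) :
    #(A.image fun a : ℤ => (a : ZMod q) * (n : ZMod q)⁻¹) = #(A.image (Int.cast : ℤ → ZMod q)) := by
  change #(A.image ((· * (n : ZMod q)⁻¹) ∘ Int.cast)) = _
  rw [← image_image]
  exact card_image_of_injective _ (IsUnit.of_mul_eq_one_right _
    (ZMod.coe_mul_inv_eq_one n hcop.symm)).mul_left_injective

theorem preimage_toZModPow_subset_padicE {p : ℕ} [Fact p.Prime] {ψ : ℕ → ℝ} {n j : ℕ}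
    (hn : ¬ p ∣ n) (hψ : ψ n = ((p : ℝ) ^ j)⁻¹) :
    PadicInt.toZModPow j ⁻¹'
      ((coprimesIcc n).image fun a : ℤ => (a : ZMod (p ^ j)) * (n : ZMod (p ^ j))⁻¹) ⊆
      padicE p ψ n := by
  intro x hx
  obtain ⟨a, ha, hxa⟩ := mem_image.mp (mem_coe.mp (Set.mem_preimage.mp hx))
  simp only [coprimesIcc, mem_filter, mem_Icc] at ha
  have hunit : (n : ZMod (p ^ j))⁻¹ * n = 1 := by
    rw [mul_comm, ZMod.coe_mul_inv_eq_one]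
    exact Nat.Coprime.pow_right j ((Nat.Prime.coprime_iff_not_dvd Fact.out).mpr hn).symm
  refine ⟨a, abs_le.mpr ha.1, ha.2, ?_⟩
  rw [hψ, ← zpow_natCast, ← zpow_neg]
  exact PadicInt.norm_sub_div_le_of_toZModPow_mul_eq hn (by rw [← hxa, mul_assoc, hunit, mul_one])

theorem stmt14_general (p : ℕ) [Fact p.Prime] [MeasurableSpace ℤ_[p]] [BorelSpace ℤ_[p]]
    (μ : Measure ℤ_[p]) [μ.IsAddHaarMeasure] [IsProbabilityMeasure μ]
    (ψ : ℕ → ℝ)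
    (hval : ∀ n : ℕ, ψ n = 0 ∨ ∃ j : ℕ, ψ n = ((p : ℝ) ^ j)⁻¹)
    (n : ℕ) (hn : ¬ p ∣ n)
    (hup : ψ n < 1 / (12 * (Nat.totient n : ℝ))) :
    ENNReal.ofReal ((Nat.totient n : ℝ) * ψ n) ≤ μ (padicE p ψ n) := by
  obtain h0 | ⟨j, hj⟩ := hval n
  · simp [h0]
  have hp : (0 : ℝ) < p := by exact_mod_cast (Fact.out : p.Prime).pos
  have hcop : (p ^ j).Coprime n :=
    Nat.Coprime.pow_left j ((Nat.Prime.coprime_iff_not_dvd Fact.out).mpr hn)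
  have h12 : 12 * n.totient ≤ p ^ j := by
    rcases Nat.eq_zero_or_pos n.totient with h | h
    · simp [h]
    rw [hj, one_div] at hup
    exact_mod_cast ((inv_lt_inv₀ (by positivity) (by positivity)).mp hup).le
  set S := (coprimesIcc n).image fun a : ℤ => (a : ZMod (p ^ j)) * (n : ZMod (p ^ j))⁻¹
  have hS : n.totient ≤ #S := by
    rw [card_image_mul_inv_natCast hcop]
    exact totient_le_card_image_coprimesIcc h12 hcop
  calc ENNReal.ofReal (n.totient * ψ n) = n.totient / (p ^ j : ℕ) := by
        rw [hj, ← div_eq_mul_inv, ENNReal.ofReal_div_of_pos (by positivity)]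
        norm_cast
    _ ≤ #S / (p ^ j : ℕ) := by gcongr
    _ = μ (PadicInt.toZModPow j ⁻¹' S) := (PadicInt.measure_preimage_toZModPow μ j S).symm
    _ ≤ μ (padicE p ψ n) := measure_mono (preimage_toZModPow_subset_padicE hn hj)

/-- **Lemma 4, first part (Haynes).** Suppose `ψ` takes values in
`{0} ∪ {p^(-j) : j ∈ ℕ}`.  If `p ∤ n` and `1/n ≤ ψ(n) < 1/(12·φ(n))`, then
`μ_p(E_n(ψ)) ≥ φ(n)·ψ(n)`. -/
theorem stmt14 (p : ℕ) [Fact p.Prime] [MeasurableSpace ℤ_[p]] [BorelSpace ℤ_[p]]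
    (μ : Measure ℤ_[p]) [μ.IsAddHaarMeasure] [IsProbabilityMeasure μ]
    (ψ : ℕ → ℝ) (hψ : ∀ n, 0 ≤ ψ n)
    (hval : ∀ n : ℕ, ψ n = 0 ∨ ∃ j : ℕ, ψ n = ((p : ℝ) ^ j)⁻¹)
    (n : ℕ) (hn : ¬ p ∣ n) (hlow : 1 / (n : ℝ) ≤ ψ n)
    (hup : ψ n < 1 / (12 * (Nat.totient n : ℝ))) :
    ENNReal.ofReal ((Nat.totient n : ℝ) * ψ n) ≤ μ (padicE p ψ n) :=
  stmt14_general p μ ψ hval n hn hup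
end
end

section
/- Let p be a prime and define ψ : ℕ → ℝ by ψ(n) = p^{−1} if p divides n and ψ(n) = 0 otherwise. Then for every n ∈ ℕ with p | n one has E_n''(ψ) = {x ∈ ℤ_p : |x|_p ≤ p^{−1}}, and consequently μ_p(W_p''(ψ)) = p^{−1}; in particular μ_p(W_p''(ψ)) is neither 0 nor 1. -/
/-!
For `p ∣ n` every admissible `a` is a `p`-adic unit, so `|a/n|_p ≥ p` keeps `a/n` away from `ℤ_p`,
while `|n/a|_p ≤ 1/p`; by the ultrametric inequality `E_n''(ψ)` is the ball `pℤ_p`. For `p ∤ n` the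
radius is `0`, so `x ∈ E_n''(ψ)` forces `x = a/n` or `x⁻¹ = a/n` in lowest terms, which pins `n`
down as a denominator: a point outside `pℤ_p` lies in at most two of the sets. Hence
`W_p''(ψ) = pℤ_p`, an additive subgroup of index `p`, whose Haar measure is `1/p`.
-/

open MeasureTheory Filter
open scoped ENNReal

noncomputable section

/-- The set `E_n''(ψ) ⊆ ℤ_p`: union over nonzero integers `a` with `|a| ≤ n`,
`gcd(a,n) = 1` of `{x : |x - a/n|_p ≤ ψ(n)} ∪ {x : |x - n/a|_p ≤ ψ(n)}`. -/
def padicE'' (p : ℕ) [Fact p.Prime] (ψ : ℕ → ℝ) (n : ℕ) : Set ℤ_[p] :=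
  {x | ∃ a : ℤ, a ≠ 0 ∧ |a| ≤ (n : ℤ) ∧ Int.gcd a n = 1 ∧
    (‖(x : ℚ_[p]) - (a : ℚ_[p]) / (n : ℚ_[p])‖ ≤ ψ n ∨
      ‖(x : ℚ_[p]) - (n : ℚ_[p]) / (a : ℚ_[p])‖ ≤ ψ n)}

/-- `W_p''(ψ)`: points of `ℤ_p` lying in infinitely many of the sets `E_n''(ψ)`. -/
def padicW'' (p : ℕ) [Fact p.Prime] (ψ : ℕ → ℝ) : Set ℤ_[p] :=
  {x | {n : ℕ | x ∈ padicE'' p ψ n}.Infinite}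

lemma IsUltrametricDist.norm_le_of_norm_sub_le {E : Type*} [SeminormedAddGroup E]
    [IsUltrametricDist E] {x y : E} {r : ℝ} (hxy : ‖x - y‖ ≤ r) (hy : ‖y‖ ≤ r) : ‖x‖ ≤ r :=
  calc ‖x‖ = ‖(x - y) + y‖ := by rw [sub_add_cancel]
    _ ≤ max ‖x - y‖ ‖y‖ := norm_add_le_max _ _
    _ ≤ r := max_le hxy hy

lemma setOf_eq_intCast_div_coprime_subsingleton (K : Type*) [DivisionRing K] [CharZero K]
    (x : K) : {n : ℕ | 0 < n ∧ ∃ a : ℤ, Int.gcd a n = 1 ∧ x = a / n}.Subsingleton := by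
  rintro n ⟨hn, a, ha, rfl⟩ m ⟨hm, b, hb, h⟩
  have hq : ((a : ℚ) / (n : ℤ)) = (b : ℚ) / (m : ℤ) :=
    Rat.cast_injective (α := K) (by push_cast; exact h)
  have hden := Rat.den_div_eq_of_coprime (Int.natCast_pos.2 hn) (Int.gcd_eq_natAbs.symm.trans ha)
  rw [hq, Rat.den_div_eq_of_coprime (Int.natCast_pos.2 hm) (Int.gcd_eq_natAbs.symm.trans hb)]
    at hden
  exact_mod_cast hden.symm

variable {p : ℕ} [hp : Fact p.Prime]

lemma Padic.norm_natCast_le_inv_of_dvd {n : ℕ} (h : p ∣ n) : ‖(n : ℚ_[p])‖ ≤ (p : ℝ)⁻¹ := by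
  simpa using (Padic.norm_le_pow_iff_norm_lt_pow_add_one (p := p) n (-1)).2 (by simpa using h)

lemma PadicInt.norm_le_inv_iff_norm_lt_one (x : ℤ_[p]) : ‖x‖ ≤ (p : ℝ)⁻¹ ↔ ‖x‖ < 1 := by
  simpa using PadicInt.norm_le_pow_iff_norm_lt_pow_add_one x (-1)

lemma PadicInt.coe_ker_toZMod :
    ((PadicInt.toZMod (p := p)).toAddMonoidHom.ker : Set ℤ_[p]) = {x | ‖x‖ ≤ (p : ℝ)⁻¹} := by
  ext x
  change x ∈ RingHom.ker PadicInt.toZMod ↔ _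
  rw [PadicInt.ker_toZMod, Set.mem_ofPred_eq, norm_le_inv_iff_norm_lt_one, ← mem_nonunits]
  rfl

lemma PadicInt.index_ker_toZMod : (PadicInt.toZMod (p := p)).toAddMonoidHom.ker.index = p := by
  rw [AddSubgroup.index_ker, AddMonoidHom.range_eq_top_of_surjective _
    (ZMod.ringHom_surjective PadicInt.toZMod), AddSubgroup.card_top, Nat.card_zmod]

lemma PadicInt.measure_setOf_norm_le_inv [MeasurableSpace ℤ_[p]] [BorelSpace ℤ_[p]]
    (μ : Measure ℤ_[p]) [μ.IsAddLeftInvariant] [IsProbabilityMeasure μ] :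
    μ {x | ‖x‖ ≤ (p : ℝ)⁻¹} = (p : ℝ≥0∞)⁻¹ := by
  set H := (PadicInt.toZMod (p := p)).toAddMonoidHom.ker
  have : H.FiniteIndex := H.finiteIndex_iff.2 (by rw [index_ker_toZMod]; exact hp.out.ne_zero)
  have hH : MeasurableSet (H : Set ℤ_[p]) := by
    rw [coe_ker_toZMod]
    exact (isClosed_le continuous_norm continuous_const).measurableSet
  have h := H.index_mul_measure hH μ
  rw [index_ker_toZMod, measure_univ, coe_ker_toZMod, mul_comm] at h
  exact ENNReal.eq_inv_of_mul_eq_one_left h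

lemma Padic.norm_intCast_eq_one_of_gcd_eq_one {a : ℤ} {n : ℕ} (hpn : p ∣ n)
    (h : Int.gcd a n = 1) : ‖(a : ℚ_[p])‖ = 1 :=
  Padic.norm_intCast_eq_one_iff.2 <|
    (Int.isCoprime_iff_gcd_eq_one.2 h).of_isCoprime_of_dvd_right (Int.natCast_dvd_natCast.2 hpn)

lemma padicE''_eq_setOf_norm_le {ψ : ℕ → ℝ} {n : ℕ} (hn : 0 < n) (hpn : p ∣ n)
    (hψ : ψ n = (p : ℝ)⁻¹) : padicE'' p ψ n = {x : ℤ_[p] | ‖x‖ ≤ (p : ℝ)⁻¹} := by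
  have hn_norm : ‖(n : ℚ_[p])‖ ≤ (p : ℝ)⁻¹ := Padic.norm_natCast_le_inv_of_dvd hpn
  have hp_inv : (p : ℝ)⁻¹ < 1 := inv_lt_one_of_one_lt₀ (mod_cast hp.out.one_lt)
  ext x
  have hx_one : ‖(x : ℚ_[p])‖ ≤ 1 := x.norm_le_one
  simp only [padicE'', hψ, Set.mem_ofPred_eq, ← PadicInt.padic_norm_e_of_padicInt]
  constructor
  · rintro ⟨a, -, -, hgcd, h | h⟩ <;> have ha := Padic.norm_intCast_eq_one_of_gcd_eq_one hpn hgcd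
    · have hle : ‖(a : ℚ_[p]) / n‖ ≤ 1 :=
        IsUltrametricDist.norm_le_of_norm_sub_le (by rw [norm_sub_rev]; linarith) hx_one
      have hgt : 1 < ‖(a : ℚ_[p]) / n‖ := by
        rw [norm_div, ha, one_div]
        exact one_lt_inv_iff₀.2 ⟨norm_pos_iff.2 (Nat.cast_ne_zero.2 hn.ne'), by linarith⟩
      exact absurd hle hgt.not_ge
    · exact IsUltrametricDist.norm_le_of_norm_sub_le h (by rwa [norm_div, ha, div_one])
  · intro hx
    refine ⟨1, one_ne_zero, by simpa using Nat.one_le_iff_ne_zero.2 hn.ne', by simp, Or.inr ?_⟩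
    exact IsUltrametricDist.norm_le_of_norm_sub_le (y := (x : ℚ_[p])) (by simpa using hn_norm) hx

lemma pos_of_mem_padicE'' {ψ : ℕ → ℝ} {n : ℕ} {x : ℤ_[p]} (hx : x ∈ padicE'' p ψ n) : 0 < n := by
  obtain ⟨a, ha, han, -⟩ := hx
  have : 0 < |a| := abs_pos.2 ha
  omega

lemma exists_eq_div_of_mem_padicE'' {ψ : ℕ → ℝ} {n : ℕ} {x : ℤ_[p]} (hψ : ψ n = 0)
    (hx : x ∈ padicE'' p ψ n) :
    ∃ a : ℤ, Int.gcd a n = 1 ∧ ((x : ℚ_[p]) = a / n ∨ (x : ℚ_[p])⁻¹ = a / n) := by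
  obtain ⟨a, -, -, hgcd, h⟩ := hx
  simp only [hψ, norm_le_zero_iff, sub_eq_zero] at h
  exact ⟨a, hgcd, h.imp id fun h ↦ by rw [h, inv_div]⟩

lemma padicW''_eq_setOf_norm_le {ψ : ℕ → ℝ}
    (hψ : ∀ n : ℕ, ψ n = if p ∣ n then ((p : ℝ))⁻¹ else 0) :
    padicW'' p ψ = {x : ℤ_[p] | ‖x‖ ≤ (p : ℝ)⁻¹} := by
  ext x
  constructor
  · intro hinf
    by_contra hx
    refine hinf (((setOf_eq_intCast_div_coprime_subsingleton _ (x : ℚ_[p])).finite.union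
      (setOf_eq_intCast_div_coprime_subsingleton _ (x : ℚ_[p])⁻¹).finite).subset ?_)
    intro n hn
    have hpn : ¬ p ∣ n := by
      intro hpn
      rw [Set.mem_ofPred_eq, padicE''_eq_setOf_norm_le (pos_of_mem_padicE'' hn) hpn
        (by simp [hψ, hpn])] at hn
      exact hx hn
    obtain ⟨a, hgcd, h | h⟩ := exists_eq_div_of_mem_padicE'' (by simp [hψ, hpn]) hn
    · exact Or.inl ⟨pos_of_mem_padicE'' hn, a, hgcd, h⟩
    · exact Or.inr ⟨pos_of_mem_padicE'' hn, a, hgcd, h⟩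
  · intro hx
    refine Set.infinite_of_forall_exists_gt fun k ↦ ⟨p * (k + 1), ?_, ?_⟩
    · have hpk : p ∣ p * (k + 1) := dvd_mul_right _ _
      rw [Set.mem_ofPred_eq, padicE''_eq_setOf_norm_le (Nat.mul_pos hp.out.pos k.succ_pos) hpk
        (by simp [hψ, hpk])]
      exact hx
    · nlinarith [hp.out.two_le]

/-- **Failure of the zero-one law for the sets `E_n''` (Haynes).** Let `p` be a prime
and `ψ(n) = 1/p` if `p ∣ n`, `ψ(n) = 0` otherwise.  Then for every `n ≥ 1` with
`p ∣ n` one has `E_n''(ψ) = {x ∈ ℤ_p : |x|_p ≤ 1/p}`, hence `μ_p(W_p''(ψ)) = 1/p`;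
in particular this measure is neither `0` nor `1`. -/
theorem stmt17 (p : ℕ) [Fact p.Prime] [MeasurableSpace ℤ_[p]] [BorelSpace ℤ_[p]]
    (μ : Measure ℤ_[p]) [μ.IsAddHaarMeasure] [IsProbabilityMeasure μ]
    (ψ : ℕ → ℝ) (hψ : ∀ n : ℕ, ψ n = if p ∣ n then ((p : ℝ))⁻¹ else 0) :
    (∀ n : ℕ, 0 < n → p ∣ n →
        padicE'' p ψ n = {x : ℤ_[p] | ‖x‖ ≤ ((p : ℝ))⁻¹}) ∧
      μ (padicW'' p ψ) = ((p : ℝ≥0∞))⁻¹ ∧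
      μ (padicW'' p ψ) ≠ 0 ∧ μ (padicW'' p ψ) ≠ 1 := by
  have hW : μ (padicW'' p ψ) = (p : ℝ≥0∞)⁻¹ := by
    rw [padicW''_eq_setOf_norm_le hψ, PadicInt.measure_setOf_norm_le_inv]
  refine ⟨fun n hn hpn ↦ padicE''_eq_setOf_norm_le hn hpn (by simp [hψ, hpn]), hW, ?_, ?_⟩
  · rw [hW]
    exact ENNReal.inv_ne_zero.2 (ENNReal.natCast_ne_top p)
  · rw [hW, Ne, ENNReal.inv_eq_one]
    exact_mod_cast ‹Fact p.Prime›.out.ne_one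
end
end

section
/- Let ℓ ≥ 0 and k ≥ 1 be integers and p_1, …, p_k (not necessarily distinct) primes, and equip X = (ℝ/ℤ)^ℓ × ℤ_{p_1} × ⋯ × ℤ_{p_k} with the sup metric. Then the (ℓ+k)-dimensional Hausdorff measure H^{ℓ+k} on X is a constant multiple of the product measure μ; that is, there is a constant c ∈ [0,∞) such that H^{ℓ+k}(F) = c·μ(F) for every Borel set F ⊆ X. Moreover H^{ℓ+k}(F) ≤ p_1⋯p_k · μ(F) for every Borel set F ⊆ X. -/
open MeasureTheory Filter
open scoped ENNReal

noncomputable section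

/-- The set `E_n^{ℓ,p_1,…,p_k}(ψ) ⊆ (ℝ/ℤ)^ℓ × ℤ_{p_1} × ⋯ × ℤ_{p_k}`: points all of
whose coordinates admit a rational approximation `a/n` with `|a| ≤ n`, `gcd(a,n) = 1`
within distance `ψ(n)` (quotient distance on the circle coordinates, `p_i`-adic
distance on the `p_i`-adic coordinates). -/
def prodE (ℓ k : ℕ) (P : Fin k → ℕ) [∀ i, Fact (P i).Prime] (ψ : ℕ → ℝ) (n : ℕ) :
    Set ((Fin ℓ → UnitAddCircle) × ((i : Fin k) → ℤ_[P i])) :=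
  {x | (∀ i : Fin ℓ, ∃ a : ℤ, |a| ≤ (n : ℤ) ∧ Int.gcd a n = 1 ∧
          ‖x.1 i - (((a : ℝ) / (n : ℝ) : ℝ) : UnitAddCircle)‖ ≤ ψ n) ∧
       (∀ i : Fin k, ∃ a : ℤ, |a| ≤ (n : ℤ) ∧ Int.gcd a n = 1 ∧
          ‖(x.2 i : ℚ_[P i]) - (a : ℚ_[P i]) / (n : ℚ_[P i])‖ ≤ ψ n)}

/-- `W_{ℓ,p_1,…,p_k}(ψ)`: points lying in infinitely many of the sets
`E_n^{ℓ,p_1,…,p_k}(ψ)`. -/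
def prodW (ℓ k : ℕ) (P : Fin k → ℕ) [∀ i, Fact (P i).Prime] (ψ : ℕ → ℝ) :
    Set ((Fin ℓ → UnitAddCircle) × ((i : Fin k) → ℤ_[P i])) :=
  {x | {n : ℕ | x ∈ prodE ℓ k P ψ n}.Infinite}

/-- The product measure on `(ℝ/ℤ)^ℓ × ℤ_{p_1} × ⋯ × ℤ_{p_k}` built from Lebesgue
measure on the circle factors and given measures on the `p_i`-adic factors. -/
def prodMeasure (ℓ k : ℕ) (P : Fin k → ℕ) [∀ i, Fact (P i).Prime]
    [∀ i, MeasurableSpace ℤ_[P i]] (μs : (i : Fin k) → Measure ℤ_[P i]) :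
    Measure ((Fin ℓ → UnitAddCircle) × ((i : Fin k) → ℤ_[P i])) :=
  (Measure.pi fun _ : Fin ℓ => (volume : Measure UnitAddCircle)).prod (Measure.pi μs)

/-!
Translations are isometries of the sup metric, so `μH[ℓ + k]` is a translation-invariant measure
on the compact group `X`; once it is finite, uniqueness of Haar measure makes it `c • μ`, with
`c = μH[ℓ + k] X` because `μ X = 1`. Both finiteness and `c ≤ p₁⋯p_k` come from one family of
covers: for each `N`, the products of the `N` arcs `[j/N, (j+1)/N]` of `ℝ/ℤ` with the `p_i ^ m_i`
balls of radius `p_i ^ (-m_i)` in `ℤ_{p_i}`, where `m_i = ⌊log_{p_i} N⌋ + 1`, have diameter at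
most `1/N` and number at most `p₁⋯p_k N^(ℓ+k)`.
-/

open Set Metric Finset

def CoverableByDiam {X : Type*} [PseudoEMetricSpace X] (s : Set X) (n : ℕ) (r : ℝ≥0∞) : Prop :=
  ∃ T : Finset (Set X), #T ≤ n ∧ s ⊆ ⋃₀ ↑T ∧ ∀ t ∈ T, ediam t ≤ r

theorem CoverableByDiam.mono {X : Type*} [PseudoEMetricSpace X] {s : Set X} {n n' : ℕ}
    {r r' : ℝ≥0∞} (hs : CoverableByDiam s n r) (hn : n ≤ n') (hr : r ≤ r') :
    CoverableByDiam s n' r' := by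
  obtain ⟨T, hTn, hsT, hTr⟩ := hs
  exact ⟨T, hTn.trans hn, hsT, fun t ht => (hTr t ht).trans hr⟩

theorem CoverableByDiam.prod {X Y : Type*} [PseudoEMetricSpace X] [PseudoEMetricSpace Y]
    {s : Set X} {s' : Set Y} {n n' : ℕ} {r : ℝ≥0∞} (hs : CoverableByDiam s n r)
    (hs' : CoverableByDiam s' n' r) : CoverableByDiam (s ×ˢ s') (n * n') r := by
  classical
  obtain ⟨T, hTn, hsT, hTr⟩ := hs
  obtain ⟨T', hTn', hsT', hTr'⟩ := hs'
  refine ⟨(T ×ˢ T').image fun t => t.1 ×ˢ t.2, ?_, ?_, ?_⟩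
  · exact card_image_le.trans (card_product T T' ▸ Nat.mul_le_mul hTn hTn')
  · rintro ⟨x, y⟩ ⟨hx, hy⟩
    obtain ⟨t, ht, hxt⟩ := mem_sUnion.1 (hsT hx)
    obtain ⟨t', ht', hyt'⟩ := mem_sUnion.1 (hsT' hy)
    exact mem_sUnion.2
      ⟨t ×ˢ t', Finset.mem_image.2 ⟨(t, t'), mem_product.2 ⟨ht, ht'⟩, rfl⟩, hxt, hyt'⟩
  · simp only [Finset.mem_image, mem_product, Prod.exists, forall_exists_index, and_imp]
    rintro _ t t' ht ht' rfl
    refine ediam_le ?_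
    rintro ⟨x, y⟩ ⟨hx, hy⟩ ⟨x', y'⟩ ⟨hx', hy'⟩
    rw [Prod.edist_eq]
    exact max_le ((edist_le_ediam_of_mem hx hx').trans (hTr t ht))
      ((edist_le_ediam_of_mem hy hy').trans (hTr' t' ht'))

theorem CoverableByDiam.pi {ι : Type*} [Fintype ι] {X : ι → Type*} [∀ i, PseudoEMetricSpace (X i)]
    {s : ∀ i, Set (X i)} {n : ι → ℕ} {r : ℝ≥0∞} (hs : ∀ i, CoverableByDiam (s i) (n i) r) :
    CoverableByDiam (univ.pi s) (∏ i, n i) r := by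
  classical
  choose T hTn hsT hTr using hs
  refine ⟨(Fintype.piFinset T).image (univ.pi ·), ?_, ?_, ?_⟩
  · exact card_image_le.trans ((Fintype.card_piFinset T).trans_le (prod_le_prod' fun i _ => hTn i))
  · intro x hx
    have hmem : ∀ i, ∃ t ∈ T i, x i ∈ t := fun i => mem_sUnion.1 (hsT i (hx i (mem_univ i)))
    choose t ht hxt using hmem
    exact mem_sUnion.2 ⟨univ.pi t, Finset.mem_image.2 ⟨t, Fintype.mem_piFinset.2 ht, rfl⟩,
      fun i _ => hxt i⟩
  · simp only [Finset.mem_image, Fintype.mem_piFinset, forall_exists_index, and_imp]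
    rintro _ t ht rfl
    exact ediam_pi_le_of_le fun i => hTr i (t i) (ht i)

theorem hausdorffMeasure_le_of_coverableByDiam {X : Type*} [EMetricSpace X] [MeasurableSpace X]
    [BorelSpace X] {d : ℝ} (hd : 0 ≤ d) {s : Set X} {C : ℝ≥0∞} (c : ℕ → ℕ)
    (hc : ∀ᶠ N in atTop, (c N : ℝ≥0∞) ≤ C * (N : ℝ≥0∞) ^ d)
    (hs : ∀ᶠ N in atTop, CoverableByDiam s (c N) (N : ℝ≥0∞)⁻¹) : μH[d] s ≤ C := by
  obtain ⟨T, hT⟩ := hs.choice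
  refine (Measure.hausdorffMeasure_le_liminf_sum d s (fun N : ℕ => (N : ℝ≥0∞)⁻¹)
    ENNReal.tendsto_inv_nat_nhds_zero (fun N (t : T N) => (t : Set X))
    (hT.mono fun N h t => h.2.2 t t.2)
    (hT.mono fun N h x hx => by
      obtain ⟨t, ht, hxt⟩ := mem_sUnion.1 (h.2.1 hx)
      exact mem_iUnion.2 ⟨⟨t, ht⟩, hxt⟩)).trans ?_
  refine liminf_le_of_frequently_le' (Eventually.frequently ?_)
  filter_upwards [hT, hc, eventually_ne_atTop 0] with N hTN hcN hN
  obtain ⟨hcard, -, hdiam⟩ := hTN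
  have hNd : (N : ℝ≥0∞) ^ d ≠ 0 := (ENNReal.rpow_pos (by positivity) (by simp)).ne'
  calc ∑ t : T N, ediam (t : Set X) ^ d
      ≤ ∑ _t : T N, ((N : ℝ≥0∞)⁻¹) ^ d :=
        Finset.sum_le_sum fun t _ => ENNReal.rpow_le_rpow (hdiam t t.2) hd
    _ = #(T N) * ((N : ℝ≥0∞) ^ d)⁻¹ := by
        rw [Finset.sum_const, Finset.card_univ, Fintype.card_coe, nsmul_eq_mul, ENNReal.inv_rpow]
    _ ≤ C * (N : ℝ≥0∞) ^ d * ((N : ℝ≥0∞) ^ d)⁻¹ := by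
        gcongr
        exact (Nat.cast_le.2 hcard).trans hcN
    _ = C := by
        rw [mul_assoc, ENNReal.mul_inv_cancel hNd (by simp [hd]), mul_one]

theorem IsUltrametricDist.ediam_closedBall_le {X : Type*} [PseudoMetricSpace X]
    [IsUltrametricDist X] (x : X) (r : ℝ) : ediam (closedBall x r) ≤ ENNReal.ofReal r := by
  refine ediam_le fun y hy z hz => ?_
  rw [edist_dist]
  refine ENNReal.ofReal_le_ofReal ((dist_triangle_max y x z).trans (max_le hy ?_))
  rwa [dist_comm]

theorem UnitAddCircle.lipschitzWith_coe : LipschitzWith 1 ((↑) : ℝ → UnitAddCircle) :=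
  LipschitzWith.of_dist_le_mul fun x y => by
    simpa [dist_eq_norm] using
      QuotientAddGroup.norm_mk_le_norm (S := AddSubgroup.zmultiples (1 : ℝ)) (m := x - y)

theorem UnitAddCircle.coverableByDiam_univ {N : ℕ} (hN : N ≠ 0) :
    CoverableByDiam (univ : Set UnitAddCircle) N (N : ℝ≥0∞)⁻¹ := by
  classical
  have hN' : (0 : ℝ) < N := by positivity
  refine ⟨(range N).image fun j : ℕ => (↑) '' Icc ((j : ℝ) / N) ((j + 1) / N), ?_, ?_, ?_⟩
  · exact card_image_le.trans (card_range N).le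
  · intro x _
    obtain ⟨⟨y, hy⟩, rfl⟩ := (AddCircle.equivIco 1 0).symm.surjective x
    simp only [zero_add, Set.mem_Ico] at hy
    have hyN : 0 ≤ y * N := mul_nonneg hy.1 hN'.le
    have hfloor : ⌊y * N⌋₊ < N := by
      rw [Nat.floor_lt hyN]
      nlinarith
    refine mem_sUnion.2 ⟨_, Finset.mem_image.2 ⟨⌊y * N⌋₊, Finset.mem_range.2 hfloor, rfl⟩, y,
      ⟨?_, ?_⟩, rfl⟩
    · rw [div_le_iff₀ hN']
      exact Nat.floor_le hyN
    · rw [le_div_iff₀ hN']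
      exact (Nat.lt_floor_add_one _).le
  · simp only [Finset.mem_image, forall_exists_index, and_imp]
    rintro _ j - rfl
    refine (UnitAddCircle.lipschitzWith_coe.ediam_image_le _).trans ?_
    rw [Real.ediam_Icc, ENNReal.coe_one, one_mul, ← sub_div, add_sub_cancel_left,
      ENNReal.ofReal_div_of_pos hN', ENNReal.ofReal_one, ENNReal.ofReal_natCast, one_div]

theorem PadicInt.coverableByDiam_univ_pow (p : ℕ) [Fact p.Prime] (m : ℕ) :
    CoverableByDiam (univ : Set ℤ_[p]) (p ^ m) (ENNReal.ofReal ((p : ℝ) ^ (-(m : ℤ)))) := by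
  classical
  refine ⟨(range (p ^ m)).image fun a : ℕ => closedBall (a : ℤ_[p]) ((p : ℝ) ^ (-(m : ℤ))),
    ?_, ?_, ?_⟩
  · exact card_image_le.trans (card_range _).le
  · intro x _
    refine mem_sUnion.2
      ⟨_, Finset.mem_image.2 ⟨x.appr m, Finset.mem_range.2 (x.appr_lt m), rfl⟩, ?_⟩
    rw [mem_closedBall, dist_eq_norm]
    exact (PadicInt.norm_le_pow_iff_mem_span_pow _ _).2 (x.appr_spec m)
  · simp only [Finset.mem_image, forall_exists_index, and_imp]
    rintro _ a - rfl
    exact IsUltrametricDist.ediam_closedBall_le _ _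

theorem PadicInt.coverableByDiam_univ (p : ℕ) [hp : Fact p.Prime] {N : ℕ} (hN : N ≠ 0) :
    CoverableByDiam (univ : Set ℤ_[p]) (p * N) (N : ℝ≥0∞)⁻¹ := by
  refine (PadicInt.coverableByDiam_univ_pow p (Nat.log p N + 1)).mono ?_ ?_
  · rw [pow_succ, mul_comm]
    exact Nat.mul_le_mul_left p (Nat.pow_log_le_self p hN)
  · have hlt : (N : ℝ) ≤ (p : ℝ) ^ (Nat.log p N + 1) := by
      exact_mod_cast (Nat.lt_pow_succ_log_self hp.out.one_lt N).le
    rw [zpow_neg, zpow_natCast, ← ENNReal.ofReal_natCast,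
      ← ENNReal.ofReal_inv_of_pos (by positivity)]
    exact ENNReal.ofReal_le_ofReal (inv_anti₀ (by positivity) hlt)

theorem hausdorffMeasure_univ_pi_unitAddCircle_prod_pi_padicInt_le (ι κ : Type*) [Fintype ι]
    [Fintype κ] (P : κ → ℕ) [∀ i, Fact (P i).Prime]
    [MeasurableSpace ((ι → UnitAddCircle) × ((i : κ) → ℤ_[P i]))]
    [BorelSpace ((ι → UnitAddCircle) × ((i : κ) → ℤ_[P i]))] :
    μH[((Fintype.card ι + Fintype.card κ : ℕ) : ℝ)]
        (univ : Set ((ι → UnitAddCircle) × ((i : κ) → ℤ_[P i]))) ≤ ∏ i, (P i : ℝ≥0∞) := by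
  refine hausdorffMeasure_le_of_coverableByDiam (Nat.cast_nonneg _)
    (fun N => N ^ Fintype.card ι * ∏ i, (P i * N)) (Eventually.of_forall fun N => ?_) ?_
  · rw [ENNReal.rpow_natCast]
    push_cast
    rw [prod_mul_distrib, prod_const, Finset.card_univ, pow_add]
    exact (by ring : _ = _).le
  · filter_upwards [eventually_ne_atTop 0] with N hN
    have h := (CoverableByDiam.pi fun _ : ι => UnitAddCircle.coverableByDiam_univ hN).prod
      (CoverableByDiam.pi fun i => PadicInt.coverableByDiam_univ (P i) hN)
    simpa only [pi_univ, univ_prod_univ, prod_const, Finset.card_univ] using h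

theorem hausdorffMeasure_eq_smul_of_ne_top {G : Type*} [NormedAddCommGroup G]
    [LocallyCompactSpace G] [SecondCountableTopology G] [MeasurableSpace G] [BorelSpace G] {d : ℝ}
    (hd : μH[d] (univ : Set G) ≠ ∞) (μ : Measure G) [μ.IsAddHaarMeasure] [IsProbabilityMeasure μ] :
    μH[d] = μH[d] (univ : Set G) • μ := by
  have : IsFiniteMeasure (μH[d] : Measure G) := ⟨hd.lt_top⟩
  set c := Measure.addHaarScalarFactor (μH[d] : Measure G) μ
  have hsmul : μH[d] = c • μ := Measure.isAddLeftInvariant_eq_smul _ _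
  have hc : μH[d] (univ : Set G) = c := by simp [hsmul]
  rwa [hc, ← ENNReal.smul_def]

theorem stmt18_general (ℓ k : ℕ)
    (P : Fin k → ℕ) [∀ i, Fact (P i).Prime]
    [∀ i, MeasurableSpace ℤ_[P i]] [∀ i, BorelSpace ℤ_[P i]]
    [BorelSpace ((Fin ℓ → UnitAddCircle) × ((i : Fin k) → ℤ_[P i]))]
    (μs : (i : Fin k) → Measure ℤ_[P i])
    [∀ i, (μs i).IsAddHaarMeasure] [∀ i, IsProbabilityMeasure (μs i)] :
    (∃ c : ℝ≥0∞, c ≠ ⊤ ∧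
        ∀ F : Set ((Fin ℓ → UnitAddCircle) × ((i : Fin k) → ℤ_[P i])),
          MeasurableSet F → μH[((ℓ + k : ℕ) : ℝ)] F = c * prodMeasure ℓ k P μs F) ∧
      ∀ F : Set ((Fin ℓ → UnitAddCircle) × ((i : Fin k) → ℤ_[P i])),
        MeasurableSet F →
          μH[((ℓ + k : ℕ) : ℝ)] F ≤ (∏ i : Fin k, (P i : ℝ≥0∞)) * prodMeasure ℓ k P μs F := by
  set c := μH[((ℓ + k : ℕ) : ℝ)] (univ : Set ((Fin ℓ → UnitAddCircle) × ((i : Fin k) → ℤ_[P i])))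
  have hle : c ≤ ∏ i, (P i : ℝ≥0∞) := by
    simpa only [Fintype.card_fin] using
      hausdorffMeasure_univ_pi_unitAddCircle_prod_pi_padicInt_le (Fin ℓ) (Fin k) P
  have hc : c ≠ ∞ := (hle.trans_lt (ENNReal.prod_lt_top fun i _ => ENNReal.natCast_lt_top _)).ne
  have : IsProbabilityMeasure (volume : Measure UnitAddCircle) := ⟨UnitAddCircle.measure_univ⟩
  have : (prodMeasure ℓ k P μs).IsAddHaarMeasure := Measure.prod.instIsAddHaarMeasure _ _
  have : IsProbabilityMeasure (prodMeasure ℓ k P μs) := by unfold prodMeasure; infer_instance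
  have heq := hausdorffMeasure_eq_smul_of_ne_top hc (prodMeasure ℓ k P μs)
  refine ⟨⟨c, hc, fun F _ => by rw [heq, Measure.smul_apply, smul_eq_mul]⟩, fun F _ => ?_⟩
  rw [heq, Measure.smul_apply, smul_eq_mul]
  gcongr

/-- **Lemma 7 (Haynes).** Let `ℓ ≥ 0`, `k ≥ 1` and `p_1, …, p_k` primes, and equip
`X = (ℝ/ℤ)^ℓ × ℤ_{p_1} × ⋯ × ℤ_{p_k}` with the sup metric.  Then the
`(ℓ+k)`-dimensional Hausdorff measure on `X` is a (finite) constant multiple of the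
product Haar measure `μ`, and moreover `H^(ℓ+k)(F) ≤ p_1⋯p_k · μ(F)` for all Borel
sets `F`. -/
theorem stmt18 (ℓ k : ℕ) (hk : 1 ≤ k)
    (P : Fin k → ℕ) [∀ i, Fact (P i).Prime]
    [∀ i, MeasurableSpace ℤ_[P i]] [∀ i, BorelSpace ℤ_[P i]]
    [BorelSpace ((Fin ℓ → UnitAddCircle) × ((i : Fin k) → ℤ_[P i]))]
    (μs : (i : Fin k) → Measure ℤ_[P i])
    [∀ i, (μs i).IsAddHaarMeasure] [∀ i, IsProbabilityMeasure (μs i)] :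
    (∃ c : ℝ≥0∞, c ≠ ⊤ ∧
        ∀ F : Set ((Fin ℓ → UnitAddCircle) × ((i : Fin k) → ℤ_[P i])),
          MeasurableSet F → μH[((ℓ + k : ℕ) : ℝ)] F = c * prodMeasure ℓ k P μs F) ∧
      ∀ F : Set ((Fin ℓ → UnitAddCircle) × ((i : Fin k) → ℤ_[P i])),
        MeasurableSet F →
          μH[((ℓ + k : ℕ) : ℝ)] F ≤ (∏ i : Fin k, (P i : ℝ≥0∞)) * prodMeasure ℓ k P μs F :=
  stmt18_general ℓ k P μs
end
end
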